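/- arXiv:2009.09303 — 8 statements merged into one kernel-verified Lean document; each statement's English description precedes it below -/
import Mathlib

section
/- Let X be a complex Banach lattice and x, y ∈ X. Then x and y are disjoint (|x| ⊓ |y| = 0) if and only if |y| ≤ |y + λx| for every complex scalar λ. -/
noncomputable section

/-- Scalar multiplication by a complex number on the complexification `E × E`
of a real Banach lattice `E` (first component: real part, second: imaginary part). -/
def cSmul {E : Type*} [AddCommGroup E] [Module ℝ E] (c : ℂ) (z : E × E) : E × E :=
  (c.re • z.1 - c.im • z.2, c.im • z.1 + c.re • z.2)

/-- `m` is the complex modulus of `z = x + iy`, i.e. the least upper bound of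
`{x cos θ + y sin θ : θ ∈ ℝ}`. -/
def IsCAbs {E : Type*} [Lattice E] [AddCommGroup E] [Module ℝ E] (z : E × E) (m : E) : Prop :=
  IsLUB {v : E | ∃ θ : ℝ, v = Real.cos θ • z.1 + Real.sin θ • z.2} m

/-!
Write `Re (w̄ z) = w.re • z.1 + w.im • z.2` for `z = z.1 + i z.2`; then `|z|` is the supremum of
`Re (w̄ z)` over unit `w`, and `Re (w̄ z) ≤ ‖w‖ |z|` for every `w`.

If `|x| ⊓ |y| = 0`, every component `Re (w̄ y)` is bounded both by `|y|` and by
`|y + λx| + |λ| |x|`, hence by `|y + λx| + |y| ⊓ |λ| |x| = |y + λx|`.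

Conversely, fix `t > 0` and put `a = |y|`, `b = t |x|`, `S = |a + ib|`. For `|λ| = t`,
`|y + λx| + |y - λx| ≤ 2S`, so the hypothesis gives `|y + λx| ≤ 2S - a`; taking the supremum over
the phase of `λ` yields `2a + b ≤ 2S`. Together with `S ≤ a + b - (2 - √2) (a ⊓ b)` this gives
`a ⊓ b ≤ κ b` with `κ = (4 - 2√2)⁻¹ < 1`, and iterating, `|x| ⊓ |y| ≤ κⁿ |x| → 0`.
-/

open Filter Topology Complex ComplexConjugate

section OrderedModule
variable {E : Type*} [AddCommGroup E] [Lattice E] [IsOrderedAddMonoid E] [Module ℝ E]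

lemma inv_two_pow_smul_nonneg {a : E} (ha : 0 ≤ a) (k : ℕ) : 0 ≤ ((2 : ℝ) ^ k)⁻¹ • a := by
  induction k with
  | zero => simpa using ha
  | succ k ih =>
    refine nsmul_two_semiclosed ?_
    rwa [← Nat.cast_smul_eq_nsmul ℝ, smul_smul, pow_succ', mul_inv, Nat.cast_two,
      mul_inv_cancel_left₀ two_ne_zero]

variable [TopologicalSpace E] [OrderClosedTopology E] [ContinuousSMul ℝ E]

lemma posSMulMono_of_orderClosedTopology : PosSMulMono ℝ E := by
  refine PosSMulMono.of_smul_nonneg fun t ht a ha => ?_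
  have hdyadic : ∀ k : ℕ, 0 ≤ ((⌊t * 2 ^ k⌋₊ : ℝ) / 2 ^ k) • a := fun k => by
    rw [div_eq_mul_inv, ← smul_smul, Nat.cast_smul_eq_nsmul]
    exact nsmul_nonneg (inv_two_pow_smul_nonneg ha k) _
  have hlim : Tendsto (fun k : ℕ => (⌊t * 2 ^ k⌋₊ : ℝ) / 2 ^ k) atTop (𝓝 t) :=
    (tendsto_nat_floor_mul_div_atTop ht).comp
      (tendsto_pow_atTop_atTop_of_one_lt one_lt_two)
  exact ge_of_tendsto' (hlim.smul_const a) hdyadic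

end OrderedModule

lemma inf_eq_zero_of_forall_inf_smul_le {E : Type*} [AddCommGroup E] [Lattice E] [Module ℝ E]
    [TopologicalSpace E] [OrderClosedTopology E] [ContinuousSMul ℝ E] {u v : E}
    (hu : 0 ≤ u) (hv : 0 ≤ v) {κ : ℝ} (hκ₀ : 0 < κ) (hκ₁ : κ < 1)
    (h : ∀ t : ℝ, 0 < t → v ⊓ t • u ≤ κ • t • u) : u ⊓ v = 0 := by
  have hpow : ∀ n : ℕ, u ⊓ v ≤ κ ^ n • u := by
    intro n
    induction n with
    | zero => simp
    | succ n ih =>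
      calc u ⊓ v ≤ v ⊓ κ ^ n • u := le_inf inf_le_right ih
        _ ≤ κ ^ (n + 1) • u := by
          rw [pow_succ', ← smul_smul]
          exact h _ (pow_pos hκ₀ n)
  have hlim : Tendsto (fun n : ℕ => κ ^ n • u) atTop (𝓝 0) := by
    simpa using (tendsto_pow_atTop_nhds_zero_of_lt_one hκ₀.le hκ₁).smul_const u
  exact le_antisymm (ge_of_tendsto' hlim hpow) (le_inf hu hv)

lemma one_lt_four_sub_two_mul_sqrt_two : 1 < 4 - 2 * √2 := by
  nlinarith [Real.sq_sqrt (show (0 : ℝ) ≤ 2 by norm_num), Real.sqrt_nonneg 2]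

section Complexification
variable {E : Type*} [AddCommGroup E] [Module ℝ E]

/-- For `z = z.1 + i z.2`, this is the real part of `conj w * z`. -/
def reInner (w : ℂ) (z : E × E) : E := w.re • z.1 + w.im • z.2

lemma reInner_add_right (w : ℂ) (z z' : E × E) :
    reInner w (z + z') = reInner w z + reInner w z' := by
  simp only [reInner, Prod.fst_add, Prod.snd_add]
  module

lemma reInner_neg_left (w : ℂ) (z : E × E) : reInner (-w) z = -reInner w z := by
  simp only [reInner, neg_re, neg_im]
  module

lemma reInner_cSmul (w c : ℂ) (z : E × E) : reInner w (cSmul c z) = reInner (conj c * w) z := by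
  simp only [reInner, cSmul, mul_re, mul_im, conj_re, conj_im]
  module

lemma reInner_exp_mul_I (θ : ℝ) (z : E × E) :
    reInner (exp (θ * I)) z = Real.cos θ • z.1 + Real.sin θ • z.2 := by
  rw [reInner, exp_ofReal_mul_I_re, exp_ofReal_mul_I_im]

end Complexification

section Modulus
variable {E : Type*} [AddCommGroup E] [Lattice E] [Module ℝ E] {z : E × E} {m m' : E}

lemma IsCAbs.le_of_forall_reInner_le (h : IsCAbs z m)
    (H : ∀ w : ℂ, ‖w‖ = 1 → reInner w z ≤ m') : m ≤ m' := by
  refine h.2 ?_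
  rintro _ ⟨θ, rfl⟩
  rw [← reInner_exp_mul_I]
  exact H _ (norm_exp_ofReal_mul_I θ)

variable [PosSMulMono ℝ E]

lemma IsCAbs.reInner_le (h : IsCAbs z m) (w : ℂ) : reInner w z ≤ ‖w‖ • m := by
  have hunit : reInner (exp (arg w * I)) z ≤ m := by
    rw [reInner_exp_mul_I]
    exact h.1 ⟨_, rfl⟩
  calc reInner w z = ‖w‖ • reInner (exp (arg w * I)) z := by
        rw [reInner, reInner, exp_ofReal_mul_I_re, exp_ofReal_mul_I_im, smul_add, smul_smul,
          smul_smul, norm_mul_cos_arg, norm_mul_sin_arg]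
    _ ≤ ‖w‖ • m := smul_le_smul_of_nonneg_left hunit (norm_nonneg w)

variable [IsOrderedAddMonoid E]

lemma IsCAbs.nonneg (h : IsCAbs z m) : 0 ≤ m := by
  refine nsmul_two_semiclosed ?_
  have h₁ := h.reInner_le 1
  have h₂ := h.reInner_le (-1)
  simp only [reInner, one_re, one_im, neg_re, neg_im, norm_one, norm_neg, one_smul, zero_smul,
    add_zero, neg_smul, neg_zero] at h₁ h₂
  simpa [two_nsmul] using add_le_add h₁ h₂

variable {x y : E × E} {u v : E}

lemma inf_smul_eq_zero (hv : 0 ≤ v) (h : v ⊓ u = 0) {r : ℝ} (hr : 0 ≤ r) : v ⊓ r • u = 0 := by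
  have hu : 0 ≤ u := h ▸ inf_le_right
  have hs : 0 < max r 1 := lt_max_of_lt_right one_pos
  refine le_antisymm ?_ (le_inf hv (smul_nonneg hr hu))
  calc v ⊓ r • u ≤ max r 1 • v ⊓ max r 1 • u :=
        inf_le_inf (le_smul_of_one_le_left hv (le_max_right r 1))
          (smul_le_smul_of_nonneg_right (le_max_left r 1) hu)
    _ = max r 1 • (v ⊓ u) := ((OrderIso.smulRight hs).map_inf v u).symm
    _ = 0 := by rw [h, smul_zero]

lemma IsCAbs.le_of_inf_eq_zero (hx : IsCAbs x u) (hy : IsCAbs y v) (c : ℂ) {W : E}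
    (hW : IsCAbs (y + cSmul c x) W) (h : u ⊓ v = 0) : v ≤ W := by
  refine hy.le_of_forall_reInner_le fun w hw => ?_
  have hsplit : reInner w y = reInner w (y + cSmul c x) + reInner (-(conj c * w)) x := by
    rw [reInner_add_right, reInner_cSmul, reInner_neg_left, add_neg_cancel_right]
  have hle : reInner w y ≤ W + ‖c‖ • u := by
    rw [hsplit]
    refine add_le_add (by simpa [hw] using hW.reInner_le w) ?_
    simpa [hw] using hx.reInner_le (-(conj c * w))
  calc reInner w y ≤ v ⊓ (W + ‖c‖ • u) := le_inf (by simpa [hw] using hy.reInner_le w) hle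
    _ ≤ (W + v) ⊓ (W + ‖c‖ • u) := inf_le_inf_right _ (le_add_of_nonneg_left hW.nonneg)
    _ = W := by
      rw [← add_inf, inf_smul_eq_zero hy.nonneg (inf_comm u v ▸ h) (norm_nonneg c), add_zero]

lemma norm_add_mul_I_norm_add_norm_sub {w w' : ℂ} (hw : ‖w‖ = 1) (hw' : ‖w'‖ = 1) :
    ‖(‖w + w'‖ : ℂ) + ‖w - w'‖ * I‖ = 2 := by
  have hpar := parallelogram_law_with_norm ℝ w w'
  rw [norm_add_mul_I, hw, hw'] at *
  rw [show (2 : ℝ) = √(2 ^ 2) by simp]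
  congr 1
  linear_combination hpar

lemma IsCAbs.add_le_two_smul (hx : IsCAbs x u) (hy : IsCAbs y v) (c : ℂ) {S W₁ W₂ : E}
    (hS : IsCAbs (v, ‖c‖ • u) S) (h₁ : IsCAbs (y + cSmul c x) W₁)
    (h₂ : IsCAbs (y + cSmul (-c) x) W₂) : W₁ + W₂ ≤ (2 : ℝ) • S := by
  suffices H : ∀ w w' : ℂ, ‖w‖ = 1 → ‖w'‖ = 1 →
      reInner w (y + cSmul c x) + reInner w' (y + cSmul (-c) x) ≤ (2 : ℝ) • S by
    refine le_sub_iff_add_le.1 (h₁.le_of_forall_reInner_le fun w hw => ?_)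
    refine le_sub_comm.1 (h₂.le_of_forall_reInner_le fun w' hw' => ?_)
    exact le_sub_iff_add_le'.2 (H w w' hw hw')
  intro w w' hw hw'
  have hsplit : reInner w (y + cSmul c x) + reInner w' (y + cSmul (-c) x)
      = reInner (w + w') y + reInner (conj c * (w - w')) x := by
    simp only [reInner, cSmul, Prod.fst_add, Prod.snd_add, add_re, add_im, sub_re, sub_im,
      mul_re, mul_im, conj_re, conj_im, neg_re, neg_im]
    module
  calc reInner w (y + cSmul c x) + reInner w' (y + cSmul (-c) x)
      ≤ ‖w + w'‖ • v + ‖w - w'‖ • ‖c‖ • u := by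
        rw [hsplit, smul_smul, mul_comm, ← norm_conj c, ← norm_mul]
        exact add_le_add (hy.reInner_le _) (hx.reInner_le _)
    _ = reInner ((‖w + w'‖ : ℂ) + ‖w - w'‖ * I) (v, ‖c‖ • u) := by
        simp [reInner]
    _ ≤ (2 : ℝ) • S := by
        simpa only [norm_add_mul_I_norm_add_norm_sub hw hw'] using
          hS.reInner_le ((‖w + w'‖ : ℂ) + ‖w - w'‖ * I)

lemma IsCAbs.add_smul_le_of_forall (hx : IsCAbs x u) (hy : IsCAbs y v) {t : ℝ} (ht : 0 < t)
    {M : E} (H : ∀ c : ℂ, ‖c‖ = t → ∀ w : ℂ, ‖w‖ = 1 → reInner w (y + cSmul c x) ≤ M) :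
    v + t • u ≤ M := by
  refine le_sub_iff_add_le.1 (hy.le_of_forall_reInner_le fun w hw => ?_)
  rw [le_sub_comm, ← le_inv_smul_iff_of_pos ht]
  refine hx.le_of_forall_reInner_le fun w' hw' => ?_
  rw [le_inv_smul_iff_of_pos ht, le_sub_iff_add_le']
  have hc : ‖(t : ℂ) * conj w' * w‖ = t := by simp [hw, hw', ht.le]
  have hrot : conj ((t : ℂ) * conj w' * w) * w = t * w' := by
    rw [map_mul, map_mul, conj_conj, conj_ofReal, mul_assoc, conj_mul', hw]
    simp
  calc reInner w y + t • reInner w' x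
      = reInner w (y + cSmul ((t : ℂ) * conj w' * w) x) := by
        rw [reInner_add_right, reInner_cSmul, hrot]
        simp [reInner, smul_add, smul_smul]
    _ ≤ M := H _ hc w hw

lemma IsCAbs.le_add_sub_smul_inf {a b S : E} (h : IsCAbs (a, b) S) (ha : 0 ≤ a) (hb : 0 ≤ b) :
    S ≤ a + b - (2 - √2) • (a ⊓ b) := by
  refine h.le_of_forall_reInner_le fun w hw => ?_
  have hre : w.re ≤ 1 := hw ▸ re_le_norm w
  have him : w.im ≤ 1 := hw ▸ im_le_norm w
  have hsum : w.re + w.im ≤ √2 := by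
    refine Real.le_sqrt_of_sq_le ?_
    have := normSq_eq_norm_sq w
    rw [normSq_apply, hw] at this
    nlinarith [sq_nonneg (w.re - w.im)]
  calc reInner w (a, b)
      = (w.re + w.im) • (a ⊓ b) + w.re • (a - a ⊓ b) + w.im • (b - a ⊓ b) := by
        simp only [reInner]
        module
    _ ≤ √2 • (a ⊓ b) + (1 : ℝ) • (a - a ⊓ b) + (1 : ℝ) • (b - a ⊓ b) := by
        gcongr
        · exact le_inf ha hb
        · exact sub_nonneg.2 inf_le_left
        · exact sub_nonneg.2 inf_le_right
    _ = a + b - (2 - √2) • (a ⊓ b) := by module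

lemma inf_smul_le_of_forall_le_add_cSmul {am : E × E → E} (ham : ∀ z, IsCAbs z (am z))
    (H : ∀ c : ℂ, am y ≤ am (y + cSmul c x)) {t : ℝ} (ht : 0 < t) :
    am y ⊓ t • am x ≤ (4 - 2 * √2)⁻¹ • t • am x := by
  set S := am (am y, t • am x)
  have hb : 0 ≤ t • am x := smul_nonneg ht.le (ham x).nonneg
  have hsup : am y + t • am x ≤ (2 : ℝ) • S - am y := by
    refine (ham x).add_smul_le_of_forall (ham y) ht fun c hc w hw => ?_
    have hpair := (ham x).add_le_two_smul (ham y) c (by rw [hc]; exact ham _) (ham _) (ham _)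
    calc reInner w (y + cSmul c x) ≤ am (y + cSmul c x) := by
          simpa [hw] using (ham _).reInner_le w
      _ ≤ (2 : ℝ) • S - am (y + cSmul (-c) x) := le_sub_iff_add_le.2 hpair
      _ ≤ (2 : ℝ) • S - am y := sub_le_sub_left (H (-c)) _
  have hS := (ham (am y, t • am x)).le_add_sub_smul_inf (ham y).nonneg hb
  have hpos : (0 : ℝ) < 4 - 2 * √2 := zero_lt_one.trans one_lt_four_sub_two_mul_sqrt_two
  rw [le_inv_smul_iff_of_pos hpos, ← sub_nonneg]
  calc (0 : E) ≤ (2 : ℝ) • (am y + t • am x - (2 - √2) • (am y ⊓ t • am x)) - am y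
        - (am y + t • am x) :=
        sub_nonneg.2 (hsup.trans (sub_le_sub_right (smul_le_smul_of_nonneg_left hS zero_le_two) _))
    _ = t • am x - (4 - 2 * √2) • (am y ⊓ t • am x) := by module

end Modulus

theorem stmt0_general {E : Type*} [NormedAddCommGroup E] [Lattice E] [IsOrderedAddMonoid E] [HasSolidNorm E] [NormedSpace ℝ E]
    (am : E × E → E) (ham : ∀ z, IsCAbs z (am z)) (x y : E × E) :
    am x ⊓ am y = 0 ↔ ∀ c : ℂ, am y ≤ am (y + cSmul c x) := by
  have : PosSMulMono ℝ E := posSMulMono_of_orderClosedTopology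
  refine ⟨fun h c => (ham x).le_of_inf_eq_zero (ham y) c (ham _) h, fun H => ?_⟩
  have hκ := one_lt_four_sub_two_mul_sqrt_two
  exact inf_eq_zero_of_forall_inf_smul_le (ham x).nonneg (ham y).nonneg
    (inv_pos.2 (zero_lt_one.trans hκ)) (inv_lt_one_of_one_lt₀ hκ)
    fun t ht => inf_smul_le_of_forall_le_add_cSmul ham H ht

/-- In a complex Banach lattice, `x ⊥ y` iff `|y| ≤ |y + λ x|` for all `λ ∈ ℂ`. -/
theorem stmt0 {E : Type*} [NormedAddCommGroup E] [Lattice E] [IsOrderedAddMonoid E] [HasSolidNorm E] [NormedSpace ℝ E] [CompleteSpace E]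
    (am : E × E → E) (ham : ∀ z, IsCAbs z (am z)) (x y : E × E) :
    am x ⊓ am y = 0 ↔ ∀ c : ℂ, am y ≤ am (y + cSmul c x) :=
  stmt0_general am ham x y
end
end

section
/- Let K be a compact Hausdorff space, X a Banach space which is a C(K)-module via an isometric unital algebra homomorphism m : C(K) → L(X), and let f ∈ C(K) act as a multiplication operator on X. Then the spectrum of the operator m(f) equals the range f(K). -/
/-! Proof idea: `m` is an algebra homomorphism, so `σ(m f) ⊆ σ(f) = f(K)`. Conversely, if
`λ = f k`, a Urysohn function `g` of sup norm one, equal to one at `k` and supported where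
`|f - λ|` is small, makes `‖(λ - f) g‖` arbitrarily small. Since `m` is isometric,
`m g` has norm one while `‖(λ - m f) (m g)‖` is just as small, so `λ - m f` is a
topological divisor of zero and cannot be invertible. -/

open Set

theorem not_isUnit_of_forall_exists_norm_mul_le {A : Type*} [NormedRing A] {a : A}
    (h : ∀ ε > 0, ∃ b : A, ‖b‖ = 1 ∧ ‖a * b‖ ≤ ε) : ¬IsUnit a := by
  rintro ⟨u, rfl⟩
  have hpos : (0 : ℝ) < ‖(↑u⁻¹ : A)‖ + 1 := by positivity
  obtain ⟨b, hb, hub⟩ := h (1 / (‖(↑u⁻¹ : A)‖ + 1)) (by positivity)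
  have hle : (1 : ℝ) ≤ ‖(↑u⁻¹ : A)‖ / (‖(↑u⁻¹ : A)‖ + 1) :=
    calc (1 : ℝ) = ‖(↑u⁻¹ : A) * (u * b)‖ := by rw [← mul_assoc, Units.inv_mul, one_mul, hb]
      _ ≤ ‖(↑u⁻¹ : A)‖ * ‖(u : A) * b‖ := norm_mul_le _ _
      _ ≤ ‖(↑u⁻¹ : A)‖ * (1 / (‖(↑u⁻¹ : A)‖ + 1)) := by gcongr
      _ = ‖(↑u⁻¹ : A)‖ / (‖(↑u⁻¹ : A)‖ + 1) := mul_one_div _ _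
  rw [le_div_iff₀ hpos] at hle
  linarith

namespace ContinuousMap

variable {K 𝕜 : Type*} [TopologicalSpace K] [CompactSpace K] [T2Space K] [RCLike 𝕜]

theorem exists_norm_eq_one_norm_sub_mul_le (f : C(K, 𝕜)) (k : K) {ε : ℝ} (hε : 0 < ε) :
    ∃ g : C(K, 𝕜), ‖g‖ = 1 ∧ ‖(algebraMap 𝕜 C(K, 𝕜) (f k) - f) * g‖ ≤ ε := by
  set U : Set K := {x | ‖f x - f k‖ < ε}
  have hU : IsOpen U := isOpen_lt (by fun_prop) continuous_const
  obtain ⟨u, hu0, hu1, hu01⟩ := exists_continuous_zero_one_of_isClosed hU.isClosed_compl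
    (isClosed_singleton (x := k)) (disjoint_singleton_right.2 fun hk => hk (by simpa [U] using hε))
  let g : C(K, 𝕜) := ⟨fun x => (u x : 𝕜), by fun_prop⟩
  have hg_le (x : K) : ‖g x‖ ≤ 1 := by
    rw [coe_mk, RCLike.norm_ofReal, abs_of_nonneg (hu01 x).1]
    exact (hu01 x).2
  have hgk : g k = 1 := by simp [g, hu1 (mem_singleton k)]
  refine ⟨g, le_antisymm ((norm_le _ zero_le_one).2 hg_le) ?_, (norm_le _ hε.le).2 fun x => ?_⟩
  · simpa [hgk] using norm_coe_le_norm g k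
  by_cases hx : x ∈ U
  · rw [mul_apply, norm_mul, sub_apply, algebraMap_apply, smul_eq_mul, mul_one, norm_sub_rev]
    simpa using mul_le_mul hx.le (hg_le x) (norm_nonneg _) hε.le
  · simp [g, hu0 hx, hε.le]

theorem range_subset_spectrum_of_isometry {A : Type*} [NormedRing A] [NormedAlgebra 𝕜 A]
    (m : C(K, 𝕜) →ₐ[𝕜] A) (hm : Isometry m) (f : C(K, 𝕜)) : range f ⊆ spectrum 𝕜 (m f) := by
  rintro _ ⟨k, rfl⟩
  refine not_isUnit_of_forall_exists_norm_mul_le fun ε hε => ?_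
  obtain ⟨g, hg, hfg⟩ := exists_norm_eq_one_norm_sub_mul_le f k hε
  have hnorm (h : C(K, 𝕜)) : ‖m h‖ = ‖h‖ := hm.norm_map_of_map_zero (map_zero m) h
  refine ⟨m g, by rw [hnorm, hg], ?_⟩
  rwa [← AlgHom.commutes m, ← map_sub, ← map_mul, hnorm]

end ContinuousMap

theorem stmt7_general {K : Type*} [TopologicalSpace K] [CompactSpace K] [T2Space K]
    {X : Type*} [NormedAddCommGroup X] [NormedSpace ℂ X]
    (m : C(K, ℂ) →ₐ[ℂ] (X →L[ℂ] X)) (hm : Isometry m) (f : C(K, ℂ)) :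
    spectrum ℂ (m f) = Set.range f :=
  ((AlgHom.spectrum_apply_subset m f).trans (ContinuousMap.spectrum_eq_range f).subset).antisymm
    (ContinuousMap.range_subset_spectrum_of_isometry m hm f)

/-- The spectrum of the multiplication operator `m f` on an exact Banach C(K)-module
equals the range of `f`. -/
theorem stmt7 {K : Type*} [TopologicalSpace K] [CompactSpace K] [T2Space K]
    {X : Type*} [NormedAddCommGroup X] [NormedSpace ℂ X] [CompleteSpace X]
    (m : C(K, ℂ) →ₐ[ℂ] (X →L[ℂ] X)) (hm : Isometry m) (f : C(K, ℂ)) :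
    spectrum ℂ (m f) = Set.range f :=
  stmt7_general m hm f
end

section
/- Let K be a compact Hausdorff space with no isolated points, X a Banach C(K)-module, and f ∈ C(K) acting as a multiplication operator on X. Then every point of the spectrum of m(f) belongs to the semi-Fredholm spectrum: for every λ ∈ f(K), the operator λI − m(f) is not semi-Fredholm; in particular σ₁(m(f)) = σ(m(f)) = f(K). -/
/-!
Let `λ = f k` and `T = λ - m f = m (λ - f)`. Since `k` is not isolated, the open set where
`|λ - f| < ε` contains infinitely many pairwise disjoint open sets, and Urysohn's lemma gives bumps
`g i`, `h i` supported in them with `h i * g i = g i` and `h i * g j = 0` for `i ≠ j`. The vectors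
`m (g i) x i` (of norm about one) are almost annihilated by `T` and are told apart by the
contractions `m (h i)`, which commute with `T` and satisfy `‖m (h i) * T‖ ≤ ε`.

If `T` had closed range, the open mapping theorem would give every `u` in the range a preimage of
norm at most `C ‖u‖`. Take `n` of the vectors with `2 C ε n < 1`. Kernel vectors within `C ε` of
them are linearly independent, and so are their classes modulo the range: in a linear relation,
applying `m (h i)` bounds each coefficient by `2 C ε` times the sum of all of them. Hence neither
the kernel nor the cokernel is finite dimensional. The spectral statement follows,
since invertible operators are semi-Fredholm and `σ (m f) ⊆ σ f = f(K)`.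
-/

open Filter Topology

section Topology

variable {X : Type*} [TopologicalSpace X]

theorem IsOpen.exists_seq_nonempty_isOpen_pairwise_disjoint [T2Space X] {U : Set X}
    (hUo : IsOpen U) (hU : U.Infinite) :
    ∃ V : ℕ → Set X, (∀ n, IsOpen (V n) ∧ (V n).Nonempty ∧ V n ⊆ U) ∧
      Pairwise (Function.onFun Disjoint V) := by
  have : Infinite U := hU.to_subtype
  obtain ⟨W, hWinf, hWo, hWd⟩ := exists_seq_infinite_isOpen_pairwise_disjoint U
  refine ⟨fun n => Subtype.val '' W n, fun n => ⟨hUo.isOpenMap_subtype_val _ (hWo n),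
    (hWinf n).nonempty.image _, Subtype.coe_image_subset _ _⟩, fun i j hij => ?_⟩
  exact (hWd hij).image Subtype.val_injective.injOn (Set.subset_univ _) (Set.subset_univ _)

theorem exists_urysohn_pair [CompactSpace X] [T2Space X] {V : Set X} (hV : IsOpen V)
    {p : X} (hp : p ∈ V) :
    ∃ g h : C(X, ℂ), ‖g‖ = 1 ∧ ‖h‖ ≤ 1 ∧ Set.EqOn h 0 Vᶜ ∧ h * g = g := by
  obtain ⟨t, ht, htc, htV⟩ := exists_mem_nhds_isClosed_subset (hV.mem_nhds hp)
  have hWV : closure (interior t) ⊆ V := (closure_minimal interior_subset htc).trans htV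
  obtain ⟨u, hu0, hu1, huI⟩ := exists_continuous_zero_one_of_isClosed
    isOpen_interior.isClosed_compl isClosed_singleton
    (Set.disjoint_singleton_right.mpr fun h => h (mem_interior_iff_mem_nhds.mpr ht))
  obtain ⟨v, hv0, hv1, hvI⟩ := exists_continuous_zero_one_of_isClosed
    hV.isClosed_compl isClosed_closure (Set.disjoint_compl_left_iff_subset.mpr hWV)
  have norm_le_one (w : C(X, ℝ)) (hw : ∀ x, w x ∈ Set.Icc (0 : ℝ) 1) :
      ‖(⟨fun x => (w x : ℂ), by fun_prop⟩ : C(X, ℂ))‖ ≤ 1 :=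
    (ContinuousMap.norm_le _ zero_le_one).mpr fun x => by
      simpa [abs_of_nonneg (hw x).1] using (hw x).2
  refine ⟨⟨fun x => (u x : ℂ), by fun_prop⟩, ⟨fun x => (v x : ℂ), by fun_prop⟩,
    (norm_le_one u huI).antisymm ?_, norm_le_one v hvI, fun x hx => by simp [hv0 hx], ?_⟩
  · have hup : u p = 1 := hu1 rfl
    calc (1 : ℝ) = ‖(u p : ℂ)‖ := by simp [hup]
      _ ≤ _ := ContinuousMap.norm_coe_le_norm ⟨fun x => (u x : ℂ), by fun_prop⟩ p
  · ext x
    by_cases hx : x ∈ interior t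
    · simp [hv1 (subset_closure hx)]
    · simp [hu0 hx]

theorem exists_bump_seq [CompactSpace X] [T2Space X] [∀ x : X, (𝓝[≠] x).NeBot] {U : Set X}
    (hU : IsOpen U) (hUne : U.Nonempty) :
    ∃ g h : ℕ → C(X, ℂ), (∀ i, ‖g i‖ = 1) ∧ (∀ i, ‖h i‖ ≤ 1) ∧ (∀ i, Set.EqOn (h i) 0 Uᶜ) ∧
      (∀ i, h i * g i = g i) ∧ ∀ ⦃i j⦄, i ≠ j → h i * g j = 0 := by
  obtain ⟨k, hk⟩ := hUne
  obtain ⟨V, hV, hVd⟩ :=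
    hU.exists_seq_nonempty_isOpen_pairwise_disjoint (infinite_of_mem_nhds k (hU.mem_nhds hk))
  choose p hp using fun i => (hV i).2.1
  choose g h hg hh hhV hhg using fun i => exists_urysohn_pair (hV i).1 (hp i)
  refine ⟨g, h, hg, hh, fun i x hx => hhV i fun hxV => hx ((hV i).2.2 hxV), hhg,
    fun i j hij => ?_⟩
  ext x
  by_cases hx : x ∈ V i
  · have hgj : g j x = 0 := by
      rw [← hhg j, ContinuousMap.mul_apply, hhV j (Set.disjoint_left.mp (hVd hij) hx),
        Pi.zero_apply, zero_mul]
    simp [hgj]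
  · simp [hhV i hx]

end Topology

theorem eq_zero_of_forall_norm_le_mul_sum {ι E : Type*} [Fintype ι] [NormedAddCommGroup E]
    {a : ι → E} {δ : ℝ} (hδ : Fintype.card ι * δ < 1) (h : ∀ i, ‖a i‖ ≤ δ * ∑ j, ‖a j‖) :
    a = 0 := by
  have hsum : ∑ j, ‖a j‖ ≤ Fintype.card ι * δ * ∑ j, ‖a j‖ := by
    simpa [Finset.sum_const, mul_assoc] using
      Finset.sum_le_sum fun i (_ : i ∈ Finset.univ) => h i
  have hzero : ∑ j, ‖a j‖ = 0 := by
    nlinarith [Finset.sum_nonneg fun j (_ : j ∈ Finset.univ) => norm_nonneg (a j)]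
  funext i
  exact norm_eq_zero.mp <|
    (Finset.sum_eq_zero_iff_of_nonneg fun j _ => norm_nonneg (a j)).mp hzero i
      (Finset.mem_univ i)

theorem norm_sum_smul_le {ι 𝕜 E : Type*} [Fintype ι] [NormedField 𝕜]
    [SeminormedAddCommGroup E] [NormedSpace 𝕜 E] (a : ι → 𝕜) {v : ι → E} {b : ℝ}
    (hv : ∀ i, ‖v i‖ ≤ b) :
    ‖∑ i, a i • v i‖ ≤ b * ∑ i, ‖a i‖ := by
  rw [Finset.mul_sum]
  refine norm_sum_le_of_le _ fun i _ => ?_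
  rw [norm_smul, mul_comm]
  exact mul_le_mul_of_nonneg_right (hv i) (norm_nonneg _)

namespace ContinuousLinearMap

variable {𝕜 E : Type*} [NontriviallyNormedField 𝕜] [NormedAddCommGroup E] [NormedSpace 𝕜 E]

section

variable {F : Type*} [NormedAddCommGroup F] [NormedSpace 𝕜 F]

def IsSemiFredholm (T : E →L[𝕜] F) : Prop :=
  IsClosed (LinearMap.range (T : E →ₗ[𝕜] F) : Set F) ∧
    (FiniteDimensional 𝕜 (LinearMap.ker (T : E →ₗ[𝕜] F)) ∨
      FiniteDimensional 𝕜 (F ⧸ LinearMap.range (T : E →ₗ[𝕜] F)))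

theorem isSemiFredholm_of_bijective {T : E →L[𝕜] F} (hT : Function.Bijective T) :
    IsSemiFredholm T := by
  refine ⟨?_, Or.inl ?_⟩
  · rw [LinearMap.range_eq_top.mpr hT.2, Submodule.top_coe]
    exact isClosed_univ
  · rw [LinearMap.ker_eq_bot.mpr hT.1]
    infer_instance

theorem exists_preimage_norm_le_of_isClosed_range [CompleteSpace E] [CompleteSpace F]
    (T : E →L[𝕜] F) (hT : IsClosed (LinearMap.range (T : E →ₗ[𝕜] F) : Set F)) :
    ∃ C > 0, ∀ u ∈ LinearMap.range (T : E →ₗ[𝕜] F), ∃ x, T x = u ∧ ‖x‖ ≤ C * ‖u‖ := by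
  have : CompleteSpace (LinearMap.range (T : E →ₗ[𝕜] F)) := hT.completeSpace_coe
  let T' := T.codRestrict _ (LinearMap.mem_range_self (T : E →ₗ[𝕜] F))
  obtain ⟨C, hC, hT'⟩ := exists_preimage_norm_le T' fun ⟨_, x, hx⟩ => ⟨x, Subtype.ext hx⟩
  refine ⟨C, hC, fun u hu => ?_⟩
  obtain ⟨x, hx, hxC⟩ := hT' ⟨u, hu⟩
  exact ⟨x, congrArg Subtype.val hx, hxC⟩

theorem exists_mem_ker_norm_sub_le {T : E →L[𝕜] F} {C : ℝ}
    (hC : ∀ u ∈ LinearMap.range (T : E →ₗ[𝕜] F), ∃ x, T x = u ∧ ‖x‖ ≤ C * ‖u‖) (x : E) :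
    ∃ z ∈ LinearMap.ker (T : E →ₗ[𝕜] F), ‖x - z‖ ≤ C * ‖T x‖ := by
  obtain ⟨x', hx', hx'C⟩ := hC (T x) (LinearMap.mem_range_self _ x)
  exact ⟨x - x', by simp [hx'], by simpa using hx'C⟩

end

structure AlmostNullFamily (T : E →L[𝕜] E) (ι : Type*) (ε : ℝ) where
  vec : ι → E
  sep : ι → E →L[𝕜] E
  half_le_norm_vec : ∀ i, 1 / 2 ≤ ‖vec i‖
  norm_vec_le_one : ∀ i, ‖vec i‖ ≤ 1
  norm_sep_le_one : ∀ i, ‖sep i‖ ≤ 1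
  sep_vec_self : ∀ i, sep i (vec i) = vec i
  sep_vec_of_ne : ∀ ⦃i j⦄, i ≠ j → sep i (vec j) = 0
  commute_sep : ∀ i, Commute (sep i) T
  norm_sep_mul_le : ∀ i, ‖sep i * T‖ ≤ ε

namespace AlmostNullFamily

variable {T : E →L[𝕜] E} {ι κ : Type*} {ε : ℝ}

variable (S : AlmostNullFamily T ι ε)

def restrict (φ : κ ↪ ι) : AlmostNullFamily T κ ε where
  vec := S.vec ∘ φ
  sep := S.sep ∘ φ
  half_le_norm_vec i := S.half_le_norm_vec (φ i)
  norm_vec_le_one i := S.norm_vec_le_one (φ i)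
  norm_sep_le_one i := S.norm_sep_le_one (φ i)
  sep_vec_self i := S.sep_vec_self (φ i)
  sep_vec_of_ne _ _ hij := S.sep_vec_of_ne (φ.injective.ne hij)
  commute_sep i := S.commute_sep (φ i)
  norm_sep_mul_le i := S.norm_sep_mul_le (φ i)

theorem norm_apply_vec_le (i : ι) : ‖T (S.vec i)‖ ≤ ε := by
  have hε : 0 ≤ ε := (norm_nonneg _).trans (S.norm_sep_mul_le i)
  calc ‖T (S.vec i)‖ = ‖(S.sep i * T) (S.vec i)‖ := by
        rw [(S.commute_sep i).eq, mul_apply_eq_comp, S.sep_vec_self]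
    _ ≤ ε * ‖S.vec i‖ := (S.sep i * T).le_of_opNorm_le (S.norm_sep_mul_le i) _
    _ ≤ ε := mul_le_of_le_one_right hε (S.norm_vec_le_one i)

variable [Fintype ι]

theorem sep_sum_smul_vec (a : ι → 𝕜) (i : ι) :
    S.sep i (∑ j, a j • S.vec j) = a i • S.vec i := by
  rw [map_sum, Finset.sum_eq_single i, map_smul, S.sep_vec_self]
  · intro j _ hji
    rw [map_smul, S.sep_vec_of_ne hji.symm, smul_zero]
  · simp

theorem norm_coeff_le (a : ι → 𝕜) (i : ι) :
    ‖a i‖ ≤ 2 * ‖S.sep i (∑ j, a j • S.vec j)‖ := by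
  rw [S.sep_sum_smul_vec, norm_smul]
  nlinarith [S.half_le_norm_vec i, norm_nonneg (a i)]

theorem card_le_finrank_ker (S : AlmostNullFamily T ι ε)
    [FiniteDimensional 𝕜 (LinearMap.ker (T : E →ₗ[𝕜] E))] {C : ℝ} (hC₀ : 0 ≤ C)
    (hC : ∀ u ∈ LinearMap.range (T : E →ₗ[𝕜] E), ∃ x, T x = u ∧ ‖x‖ ≤ C * ‖u‖)
    (hsmall : Fintype.card ι * (2 * C * ε) < 1) :
    Fintype.card ι ≤ Module.finrank 𝕜 (LinearMap.ker (T : E →ₗ[𝕜] E)) := by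
  choose z hz hdist using fun i => exists_mem_ker_norm_sub_le hC (S.vec i)
  refine LinearIndependent.fintype_card_le_finrank (b := fun i => ⟨z i, hz i⟩) <|
    Fintype.linearIndependent_iff.mpr fun a ha => congrFun <|
      eq_zero_of_forall_norm_le_mul_sum hsmall fun i => ?_
  have hza : ∑ j, a j • z j = 0 := by simpa using congrArg Subtype.val ha
  calc ‖a i‖ ≤ 2 * ‖S.sep i (∑ j, a j • S.vec j)‖ := S.norm_coeff_le a i
    _ ≤ 2 * ‖∑ j, a j • (S.vec j - z j)‖ := by
        simp only [smul_sub, Finset.sum_sub_distrib, hza, sub_zero]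
        gcongr
        exact ((S.sep i).le_of_opNorm_le (S.norm_sep_le_one i) _).trans_eq (one_mul _)
    _ ≤ 2 * ((C * ε) * ∑ j, ‖a j‖) := by
        gcongr
        exact norm_sum_smul_le a fun j =>
          (hdist j).trans (mul_le_mul_of_nonneg_left (S.norm_apply_vec_le j) hC₀)
    _ = 2 * C * ε * ∑ j, ‖a j‖ := by ring

theorem card_le_finrank_quotient_range (S : AlmostNullFamily T ι ε)
    [FiniteDimensional 𝕜 (E ⧸ LinearMap.range (T : E →ₗ[𝕜] E))] {C : ℝ} (hC₀ : 0 ≤ C)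
    (hC : ∀ u ∈ LinearMap.range (T : E →ₗ[𝕜] E), ∃ x, T x = u ∧ ‖x‖ ≤ C * ‖u‖)
    (hsmall : Fintype.card ι * (2 * C * ε) < 1) :
    Fintype.card ι ≤ Module.finrank 𝕜 (E ⧸ LinearMap.range (T : E →ₗ[𝕜] E)) := by
  refine LinearIndependent.fintype_card_le_finrank
    (b := fun i => (LinearMap.range (T : E →ₗ[𝕜] E)).mkQ (S.vec i)) <|
    Fintype.linearIndependent_iff.mpr fun a ha => congrFun <|
      eq_zero_of_forall_norm_le_mul_sum hsmall fun i => ?_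
  have hw : ∑ j, a j • S.vec j ∈ LinearMap.range (T : E →ₗ[𝕜] E) := by
    rw [← Submodule.Quotient.mk_eq_zero, ← Submodule.mkQ_apply, map_sum]
    simpa using ha
  obtain ⟨x, hx, hxC⟩ := hC _ hw
  have hε₀ : 0 ≤ ε := (norm_nonneg _).trans (S.norm_sep_mul_le i)
  calc ‖a i‖ ≤ 2 * ‖S.sep i (∑ j, a j • S.vec j)‖ := S.norm_coeff_le a i
    _ = 2 * ‖(S.sep i * T) x‖ := by rw [← hx, mul_apply_eq_comp]
    _ ≤ 2 * (ε * (C * ‖∑ j, a j • S.vec j‖)) := by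
        gcongr
        exact ((S.sep i * T).le_of_opNorm_le (S.norm_sep_mul_le i) x).trans
          (mul_le_mul_of_nonneg_left hxC hε₀)
    _ ≤ 2 * (ε * (C * (1 * ∑ j, ‖a j‖))) := by
        gcongr
        exact norm_sum_smul_le a S.norm_vec_le_one
    _ = 2 * C * ε * ∑ j, ‖a j‖ := by ring

end AlmostNullFamily

theorem not_isSemiFredholm_of_forall_almostNullFamily [CompleteSpace E] {T : E →L[𝕜] E}
    (hT : ∀ ε > 0, Nonempty (AlmostNullFamily T ℕ ε)) : ¬ IsSemiFredholm T := by
  rintro ⟨hclosed, hfin⟩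
  obtain ⟨C, hC₀, hC⟩ := exists_preimage_norm_le_of_isClosed_range T hclosed
  have small_family (d : ℕ) : ∃ ε, Nonempty (AlmostNullFamily T (Fin (d + 1)) ε) ∧
      Fintype.card (Fin (d + 1)) * (2 * C * ε) < 1 := by
    refine ⟨1 / (4 * C * (d + 1)), ?_, ?_⟩
    · obtain ⟨S⟩ := hT (1 / (4 * C * (d + 1))) (by positivity)
      exact ⟨S.restrict Fin.valEmbedding⟩
    · rw [Fintype.card_fin]; push_cast; field_simp; norm_num
  rcases hfin with hker | hcoker
  · obtain ⟨ε, ⟨S⟩, hsmall⟩ := small_family (Module.finrank 𝕜 (LinearMap.ker (T : E →ₗ[𝕜] E)))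
    simpa using S.card_le_finrank_ker hC₀.le hC hsmall
  · obtain ⟨ε, ⟨S⟩, hsmall⟩ :=
      small_family (Module.finrank 𝕜 (E ⧸ LinearMap.range (T : E →ₗ[𝕜] E)))
    simpa using S.card_le_finrank_quotient_range hC₀.le hC hsmall

end ContinuousLinearMap

section BanachModule

variable {K Y : Type*} [TopologicalSpace K] [CompactSpace K] [T2Space K]
  [NormedAddCommGroup Y] [NormedSpace ℂ Y]

theorem exists_almostNullFamily [∀ x : K, (𝓝[≠] x).NeBot] (M : C(K, ℂ) →ₐ[ℂ] (Y →L[ℂ] Y))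
    (hM : ∀ g, ‖M g‖ = ‖g‖) {e : C(K, ℂ)} {k : K} (hk : e k = 0) {ε : ℝ} (hε : 0 < ε) :
    Nonempty (ContinuousLinearMap.AlmostNullFamily (M e) ℕ ε) := by
  set U := {x | ‖e x‖ < ε}
  obtain ⟨g, h, hg, hh, hhU, hhg_self, hhg_ne⟩ :=
    exists_bump_seq (isOpen_lt (by fun_prop) continuous_const)
      (⟨k, show ‖e k‖ < ε by simpa [hk]⟩ : U.Nonempty)
  have hhe (i : ℕ) : ‖h i * e‖ ≤ ε := (ContinuousMap.norm_le _ hε.le).mpr fun x => by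
    by_cases hx : x ∈ U
    · rw [ContinuousMap.mul_apply, norm_mul]
      exact (mul_le_of_le_one_left (norm_nonneg _)
        ((ContinuousMap.norm_coe_le_norm _ x).trans (hh i))).trans hx.le
    · simp [hhU i hx, hε.le]
  choose x hx1 hx2 using fun i => (M (g i)).exists_lt_apply_of_lt_opNorm
    (show (1 / 2 : ℝ) < ‖M (g i)‖ by rw [hM, hg]; norm_num)
  exact ⟨{
    vec i := M (g i) (x i)
    sep i := M (h i)
    half_le_norm_vec i := (hx2 i).le
    norm_vec_le_one i :=
      ((M (g i)).le_of_opNorm_le (by rw [hM, hg]) _).trans (by simpa using (hx1 i).le)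
    norm_sep_le_one i := (hM _).trans_le (hh i)
    sep_vec_self i := by rw [← mul_apply_eq_comp, ← map_mul, hhg_self]
    sep_vec_of_ne i j hij := by rw [← mul_apply_eq_comp, ← map_mul, hhg_ne hij, map_zero]; rfl
    commute_sep i := (Commute.all (h i) e).map M
    norm_sep_mul_le i := by rw [← map_mul, hM]; exact hhe i }⟩

end BanachModule

/-- If K has no isolated points, then every point of the spectrum of the multiplication
operator `m f` on a Banach C(K)-module belongs to the semi-Fredholm spectrum:
λI − m f is not semi-Fredholm for any λ ∈ f(K); moreover σ(m f) = f(K). -/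
theorem stmt8 {K : Type*} [TopologicalSpace K] [CompactSpace K] [T2Space K]
    {X : Type*} [NormedAddCommGroup X] [NormedSpace ℂ X] [CompleteSpace X]
    (m : C(K, ℂ) →ₐ[ℂ] (X →L[ℂ] X)) (hm : Isometry m)
    (hiso : ∀ k : K, ¬ IsOpen ({k} : Set K))
    (f : C(K, ℂ)) :
    (∀ l ∈ Set.range f,
      ¬ (IsClosed (LinearMap.range ((l • (1 : X →L[ℂ] X) - m f : X →L[ℂ] X) : X →ₗ[ℂ] X) : Set X) ∧
         (FiniteDimensional ℂ (LinearMap.ker ((l • (1 : X →L[ℂ] X) - m f : X →L[ℂ] X) : X →ₗ[ℂ] X)) ∨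
          FiniteDimensional ℂ (X ⧸ LinearMap.range ((l • (1 : X →L[ℂ] X) - m f : X →L[ℂ] X) : X →ₗ[ℂ] X))))) ∧
    spectrum ℂ (m f) = Set.range f := by
  have : ∀ x : K, (𝓝[≠] x).NeBot := fun x =>
    ⟨fun h => hiso x ((isOpen_singleton_iff_punctured_nhds x).mpr h)⟩
  have hM (g : C(K, ℂ)) : ‖m g‖ = ‖g‖ := by simpa using hm.norm_map_of_map_zero (map_zero m) g
  have not_semiFredholm : ∀ l ∈ Set.range f,
      ¬ ContinuousLinearMap.IsSemiFredholm (l • (1 : X →L[ℂ] X) - m f) := by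
    rintro _ ⟨k, rfl⟩
    have hT : f k • (1 : X →L[ℂ] X) - m f = m (f k • 1 - f) := by
      rw [map_sub, map_smul, map_one]
    rw [hT]
    exact ContinuousLinearMap.not_isSemiFredholm_of_forall_almostNullFamily fun ε hε =>
      exists_almostNullFamily m hM (k := k) (by simp) hε
  refine ⟨not_semiFredholm, subset_antisymm ?_ fun l hl => by_contra fun hl' => ?_⟩
  · simpa [ContinuousMap.spectrum_eq_range] using AlgHom.spectrum_apply_subset m f
  · rw [spectrum.mem_iff, not_not, Algebra.algebraMap_eq_smul_one,
      ContinuousLinearMap.isUnit_iff_bijective] at hl'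
    exact not_semiFredholm l hl (ContinuousLinearMap.isSemiFredholm_of_bijective hl')
end

section
/- Let K be an extremally disconnected compact Hausdorff space, X a Kaplansky C(K)-module, and T ∈ L(X) an operator commuting with all multiplication operators from C(K). If K has no isolated points, then every eigenvalue of T has infinite-dimensional eigenspace: λ ∈ σ_p(T) implies dim ker(λI − T) = ∞; consequently if λI − T is upper semi-Fredholm then ker(λI − T) = 0. -/
/-!
Let `x` be an eigenvector of `T` with carrier `U`, a nonempty clopen subset of `K`. Since `T`
commutes with the multiplication operators, every `m f x` is again an eigenvector, and
`m f x = 0` forces `f` to vanish on `U`. As `K` has no isolated points, `U` contains infinitely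
many pairwise disjoint nonempty clopen sets, and the products of `x` with their characteristic
functions are linearly independent vectors of the eigenspace.
-/

open Set Function

section TotallySeparated

variable {K : Type*} [TopologicalSpace K] [TotallySeparatedSpace K]

lemma exists_isClopen_ssubset (hiso : ∀ k : K, ¬ IsOpen ({k} : Set K)) {W : Set K}
    (hW : IsClopen W) (hne : W.Nonempty) : ∃ W' ⊂ W, IsClopen W' ∧ W'.Nonempty := by
  obtain ⟨k, hk⟩ := hne
  obtain ⟨k', hk', hk'k⟩ : ∃ k' ∈ W, k' ≠ k := by
    by_contra! h
    exact hiso k (eq_singleton_iff_unique_mem.mpr ⟨hk, h⟩ ▸ hW.isOpen)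
  obtain ⟨C, hC, hk'C, hkC⟩ := exists_isClopen_of_totally_separated hk'k
  exact ⟨W ∩ C, ⟨inter_subset_left, fun h => hkC (h hk).2⟩, hW.inter hC, k', hk', hk'C⟩

lemma exists_pairwise_disjoint_isClopen_subsets (hiso : ∀ k : K, ¬ IsOpen ({k} : Set K))
    {U : Set K} (hU : IsClopen U) (hne : U.Nonempty) :
    ∃ V : ℕ → Set K, Pairwise (Disjoint on V) ∧ ∀ n, IsClopen (V n) ∧ (V n).Nonempty ∧ V n ⊆ U := by
  choose! shrink hshrink_ssubset hshrink using
    fun W (h : IsClopen W ∧ W.Nonempty) => exists_isClopen_ssubset hiso h.1 h.2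
  set W : ℕ → Set K := fun n => shrink^[n] U
  have hW_succ (n : ℕ) : W (n + 1) = shrink (W n) := Function.iterate_succ_apply' _ n U
  have hW (n : ℕ) : IsClopen (W n) ∧ (W n).Nonempty := by
    induction n with
    | zero => exact ⟨hU, hne⟩
    | succ n ih => rw [hW_succ]; exact hshrink _ ih
  have hW_ssubset (n : ℕ) : W (n + 1) ⊂ W n := hW_succ n ▸ hshrink_ssubset _ (hW n)
  have hW_anti : Antitone W := antitone_nat_of_succ_le fun n => (hW_ssubset n).subset
  refine ⟨fun n => W n \ W (n + 1), (pairwise_disjoint_on _).mpr fun i j hij => ?_,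
    fun n => ⟨(hW n).1.diff (hW (n + 1)).1, nonempty_of_ssubset (hW_ssubset n),
      sdiff_subset.trans (hW_anti n.zero_le)⟩⟩
  exact disjoint_sdiff_left.mono_right (sdiff_subset.trans (hW_anti hij))

end TotallySeparated

section CharFn

variable {K 𝕜 M : Type*} [TopologicalSpace K] [NormedField 𝕜] [AddCommGroup M] [Module 𝕜 M]

lemma linearIndependent_map_charFn {ι : Type*} (Φ : C(K, 𝕜) →ₗ[𝕜] M) {U : Set K}
    (hΦ : ∀ f, Φ f = 0 → ∀ k ∈ U, f k = 0) {V : ι → Set K} (hV : ∀ i, IsClopen (V i))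
    (hdisj : Pairwise (Disjoint on V)) (hVU : ∀ i, (V i ∩ U).Nonempty) :
    LinearIndependent 𝕜 fun i => Φ (LocallyConstant.charFn 𝕜 (hV i)) := by
  rw [linearIndependent_iff']
  intro s c hsum i hi
  obtain ⟨k, hkV, hkU⟩ := hVU i
  have hk := hΦ (∑ j ∈ s, c j • (LocallyConstant.charFn 𝕜 (hV j) : C(K, 𝕜)))
    (by simpa only [map_sum, map_smul] using hsum) k hkU
  rw [ContinuousMap.sum_apply, Finset.sum_eq_single i] at hk
  · simpa [LocallyConstant.coe_charFn, hkV] using hk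
  · intro j _ hji
    have : k ∉ V j := fun hkj => (hdisj hji).ne_of_mem hkj hkV rfl
    simp [LocallyConstant.coe_charFn, this]
  · exact fun h => (h hi).elim

lemma LinearMap.not_finiteDimensional_of_vanishing_on_clopen [TotallySeparatedSpace K]
    (hiso : ∀ k : K, ¬ IsOpen ({k} : Set K)) (Φ : C(K, 𝕜) →ₗ[𝕜] M) {U : Set K}
    (hU : IsClopen U) (hne : U.Nonempty) (hΦ : ∀ f, Φ f = 0 → ∀ k ∈ U, f k = 0) :
    ¬ FiniteDimensional 𝕜 M := by
  intro
  obtain ⟨V, hdisj, hV⟩ := exists_pairwise_disjoint_isClopen_subsets hiso hU hne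
  exact Module.Finite.not_linearIndependent_of_infinite _ <|
    linearIndependent_map_charFn Φ hΦ (fun n => (hV n).1) hdisj
      fun n => (hV n).2.1.mono (subset_inter subset_rfl (hV n).2.2)

end CharFn

section Kaplansky

variable {K 𝕜 X : Type*} [TopologicalSpace K] [NontriviallyNormedField 𝕜] [NormedAddCommGroup X]
  [NormedSpace 𝕜 X] (m : C(K, 𝕜) →ₐ[𝕜] (X →L[𝕜] X)) {T : X →L[𝕜] X}

lemma map_apply_mem_ker_of_apply_eq_smul (hcomm : ∀ f : C(K, 𝕜), T.comp (m f) = (m f).comp T)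
    {l : 𝕜} {x : X} (hTx : T x = l • x) (f : C(K, 𝕜)) :
    m f x ∈ LinearMap.ker ((l • (1 : X →L[𝕜] X) - T : X →L[𝕜] X) : X →ₗ[𝕜] X) := by
  have hT : T (m f x) = m f (T x) := congr($(hcomm f) x)
  simp [hT, hTx]

lemma not_finiteDimensional_ker_of_apply_eq_smul [TotallySeparatedSpace K]
    (hiso : ∀ k : K, ¬ IsOpen ({k} : Set K))
    (hcomm : ∀ f : C(K, 𝕜), T.comp (m f) = (m f).comp T) {l : 𝕜} {x : X} (hx : x ≠ 0)
    (hTx : T x = l • x) {U : Set K} (hUclopen : IsClopen U)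
    (hU : ∀ f : C(K, 𝕜), m f x = 0 ↔ ∀ k ∈ U, f k = 0) :
    ¬ FiniteDimensional 𝕜 (LinearMap.ker ((l • (1 : X →L[𝕜] X) - T : X →L[𝕜] X) : X →ₗ[𝕜] X)) := by
  have hUne : U.Nonempty := by
    by_contra! hempty
    exact hx (by simpa using (hU 1).mpr (by simp [hempty]))
  let Φ := ((ContinuousLinearMap.apply 𝕜 X x).toLinearMap ∘ₗ m.toLinearMap).codRestrict _
    (map_apply_mem_ker_of_apply_eq_smul m hcomm hTx)
  refine Φ.not_finiteDimensional_of_vanishing_on_clopen hiso hUclopen hUne fun f hf => ?_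
  exact (hU f).mp (congr_arg Subtype.val hf)

end Kaplansky

theorem stmt9_general {K : Type*} [TopologicalSpace K] [T2Space K]
    [ExtremallyDisconnected K]
    {X : Type*} [NormedAddCommGroup X] [NormedSpace ℂ X]
    (m : C(K, ℂ) →ₐ[ℂ] (X →L[ℂ] X))
    (hKap : ∀ x : X, ∃ U : Set K, IsClopen U ∧
        ∀ f : C(K, ℂ), (m f x = 0 ↔ ∀ k ∈ U, f k = 0))
    (hiso : ∀ k : K, ¬ IsOpen ({k} : Set K))
    (T : X →L[ℂ] X) (hcomm : ∀ f : C(K, ℂ), T.comp (m f) = (m f).comp T) :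
    (∀ l : ℂ, (∃ x : X, x ≠ 0 ∧ T x = l • x) →
        ¬ FiniteDimensional ℂ (LinearMap.ker ((l • (1 : X →L[ℂ] X) - T : X →L[ℂ] X) : X →ₗ[ℂ] X))) ∧
    (∀ l : ℂ, IsClosed (LinearMap.range ((l • (1 : X →L[ℂ] X) - T : X →L[ℂ] X) : X →ₗ[ℂ] X) : Set X) →
        FiniteDimensional ℂ (LinearMap.ker ((l • (1 : X →L[ℂ] X) - T : X →L[ℂ] X) : X →ₗ[ℂ] X)) →
        LinearMap.ker ((l • (1 : X →L[ℂ] X) - T : X →L[ℂ] X) : X →ₗ[ℂ] X) = ⊥) := by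
  have infinite_eigenspace (l : ℂ) {x : X} (hx : x ≠ 0) (hTx : T x = l • x) :
      ¬ FiniteDimensional ℂ (LinearMap.ker ((l • (1 : X →L[ℂ] X) - T : X →L[ℂ] X) : X →ₗ[ℂ] X)) :=
    have ⟨_, hUclopen, hU⟩ := hKap x
    not_finiteDimensional_ker_of_apply_eq_smul m hiso hcomm hx hTx hUclopen hU
  refine ⟨fun l ⟨x, hx, hTx⟩ => infinite_eigenspace l hx hTx, fun l _ hfin => ?_⟩
  by_contra hne
  obtain ⟨y, hy, hy0⟩ := Submodule.exists_mem_ne_zero_of_ne_bot hne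
  have hTy : T y = l • y := (sub_eq_zero.mp (by simpa using LinearMap.mem_ker.mp hy)).symm
  exact infinite_eigenspace l hy0 hTy hfin

/-- On a Kaplansky C(K)-module over an extremally disconnected compact Hausdorff space K
without isolated points, an operator T commuting with all multiplication operators has
infinite-dimensional eigenspaces; consequently if λI − T is upper semi-Fredholm then
its kernel is trivial. -/
theorem stmt9 {K : Type*} [TopologicalSpace K] [CompactSpace K] [T2Space K]
    [ExtremallyDisconnected K]
    {X : Type*} [NormedAddCommGroup X] [NormedSpace ℂ X] [CompleteSpace X]
    (m : C(K, ℂ) →ₐ[ℂ] (X →L[ℂ] X)) (hm : Isometry m)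
    (hKap : ∀ x : X, ∃ U : Set K, IsClopen U ∧
        ∀ f : C(K, ℂ), (m f x = 0 ↔ ∀ k ∈ U, f k = 0))
    (hiso : ∀ k : K, ¬ IsOpen ({k} : Set K))
    (T : X →L[ℂ] X) (hcomm : ∀ f : C(K, ℂ), T.comp (m f) = (m f).comp T) :
    (∀ l : ℂ, (∃ x : X, x ≠ 0 ∧ T x = l • x) →
        ¬ FiniteDimensional ℂ (LinearMap.ker ((l • (1 : X →L[ℂ] X) - T : X →L[ℂ] X) : X →ₗ[ℂ] X))) ∧
    (∀ l : ℂ, IsClosed (LinearMap.range ((l • (1 : X →L[ℂ] X) - T : X →L[ℂ] X) : X →ₗ[ℂ] X) : Set X) →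
        FiniteDimensional ℂ (LinearMap.ker ((l • (1 : X →L[ℂ] X) - T : X →L[ℂ] X) : X →ₗ[ℂ] X)) →
        LinearMap.ker ((l • (1 : X →L[ℂ] X) - T : X →L[ℂ] X) : X →ₗ[ℂ] X) = ⊥) :=
  stmt9_general m hKap hiso T hcomm
end

section
/- Let K be a compact Hausdorff space, φ : K → K a homeomorphism, w ∈ C(K), and T the weighted composition operator (Tf)(k) = w(k) f(φ(k)) on C(K). Then T is semi-Fredholm if and only if T is Fredholm of index 0, if and only if the zero set Z(w) = {k ∈ K : w(k) = 0} is finite and consists of isolated points of K. -/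
/-!
Since `φ` is a homeomorphism, `T` is the multiplication operator `M_w` composed with the
automorphism `f ↦ f ∘ φ`, so it suffices to treat `M_w`. If `M_w` has closed range, then by the
description of closed ideals of `C(K)` its range is the ideal of functions vanishing on `Z(w)`;
in particular `√|w| = w h` for some `h`, so `|w| ≥ ‖h‖⁻²` off `Z(w)` and `Z(w)` is open.
An open (resp. arbitrary) zero set with infinitely many points yields, by Urysohn and Tietze,
functions in the kernel (resp. cokernel) interpolating arbitrary values on any finite subset, so a
finite-dimensional kernel or cokernel forces `Z(w)` to be finite. Conversely, when `Z(w)` is a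
finite set of isolated points, `g / w` is continuous for every `g` vanishing on `Z(w)`, and both
the kernel and the cokernel of `M_w` are identified with `ℂ^{Z(w)}` by evaluation.
-/

open ContinuousMap LinearMap Module

theorem ContinuousMap.exists_forall_mem_finset_eq_and_eqOn_zero {X 𝕜 : Type*} [TopologicalSpace X]
    [NormalSpace X] [T1Space X] [RCLike 𝕜] {S s : Set X} (hs : IsClosed s) (hsS : Disjoint s S)
    (t : Finset S) (c : S → 𝕜) :
    ∃ f : C(X, 𝕜), (∀ i ∈ t, f i = c i) ∧ Set.EqOn f 0 s := by
  set T : Set X := (↑) '' (t : Set S)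
  have hT : T.Finite := t.finite_toSet.image _
  have : Finite T := hT.to_subtype
  obtain ⟨f, hf⟩ := ContinuousMap.exists_restrict_eq hT.isClosed
    ⟨fun y : T => c ⟨y, Subtype.coe_image_subset S t y.2⟩, continuous_of_discreteTopology⟩
  obtain ⟨g, hg0, hg1, -⟩ := exists_continuous_zero_one_of_isClosed hs hT.isClosed
    (hsS.mono_right (Subtype.coe_image_subset S t))
  refine ⟨⟨fun x => (g x : 𝕜) * f x, by fun_prop⟩, fun i hi => ?_, fun x hx => ?_⟩
  · have hiT : (i : X) ∈ T := Set.mem_image_of_mem _ hi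
    have hfi : f i = c i := congr($hf ⟨i, hiT⟩)
    simp [hg1 hiT, hfi]
  · simp [hg0 hx]

theorem finite_of_forall_finset_exists_apply_eq {R ι V : Type*} [Ring R] [StrongRankCondition R]
    [AddCommMonoid V] [Module R V] [Module.Finite R V] (E : V →ₗ[R] ι → R)
    (hE : ∀ (t : Finset ι) (c : ι → R), ∃ v, ∀ i ∈ t, E v i = c i) : Finite ι := by
  classical
  by_contra hι
  have : Infinite ι := not_finite_iff_infinite.mp hι
  obtain ⟨t, ht⟩ := Infinite.exists_subset_card_eq ι (finrank R V + 1)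
  have hsurj : Function.Surjective (funLeft R R ((↑) : t → ι) ∘ₗ E) := fun c => by
    obtain ⟨v, hv⟩ := hE t fun i => if h : i ∈ t then c ⟨i, h⟩ else 0
    exact ⟨v, funext fun i => by simp [funLeft, hv i i.2]⟩
  have := finrank_le_finrank_of_surjective hsurj
  simp [ht] at this

section Fredholm

variable {𝕜 U V W : Type*} [Field 𝕜] [AddCommGroup U] [Module 𝕜 U] [AddCommGroup V] [Module 𝕜 V]
  [AddCommGroup W] [Module 𝕜 W] [TopologicalSpace W]

def LinearMap.IsSemiFredholm (A : V →ₗ[𝕜] W) : Prop :=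
  IsClosed (range A : Set W) ∧ (FiniteDimensional 𝕜 (ker A) ∨ FiniteDimensional 𝕜 (W ⧸ range A))

def LinearMap.IsFredholmOfIndexZero (A : V →ₗ[𝕜] W) : Prop :=
  IsClosed (range A : Set W) ∧ FiniteDimensional 𝕜 (ker A) ∧ FiniteDimensional 𝕜 (W ⧸ range A) ∧
    finrank 𝕜 (ker A) = finrank 𝕜 (W ⧸ range A)

theorem LinearMap.IsFredholmOfIndexZero.isSemiFredholm {A : V →ₗ[𝕜] W}
    (hA : A.IsFredholmOfIndexZero) : A.IsSemiFredholm :=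
  ⟨hA.1, Or.inl hA.2.1⟩

noncomputable def LinearMap.kerCompEquiv (A : V →ₗ[𝕜] W) (e : U ≃ₗ[𝕜] V) :
    ker (A ∘ₗ (e : U →ₗ[𝕜] V)) ≃ₗ[𝕜] ker A :=
  (LinearEquiv.ofEq _ _ (by rw [ker_comp, Submodule.comap_equiv_eq_map_symm])).trans
    (e.symm.submoduleMap (ker A)).symm

theorem LinearMap.isSemiFredholm_comp_equiv_iff (A : V →ₗ[𝕜] W) (e : U ≃ₗ[𝕜] V) :
    (A ∘ₗ (e : U →ₗ[𝕜] V)).IsSemiFredholm ↔ A.IsSemiFredholm := by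
  rw [IsSemiFredholm, IsSemiFredholm, range_comp_of_range_eq_top A e.range]
  simp only [FiniteDimensional, Module.Finite.equiv_iff (A.kerCompEquiv e)]

theorem LinearMap.isFredholmOfIndexZero_comp_equiv_iff (A : V →ₗ[𝕜] W) (e : U ≃ₗ[𝕜] V) :
    (A ∘ₗ (e : U →ₗ[𝕜] V)).IsFredholmOfIndexZero ↔ A.IsFredholmOfIndexZero := by
  rw [IsFredholmOfIndexZero, IsFredholmOfIndexZero, range_comp_of_range_eq_top A e.range]
  simp only [FiniteDimensional,
    Module.Finite.equiv_iff (A.kerCompEquiv e), (A.kerCompEquiv e).finrank_eq]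

end Fredholm

namespace ContinuousMap

section MulLeft

variable {X 𝕜 : Type*} [TopologicalSpace X] [RCLike 𝕜]

variable (𝕜) in
def evalOnCLM (S : Set X) : C(X, 𝕜) →L[𝕜] S → 𝕜 :=
  ContinuousLinearMap.pi fun x => evalCLM 𝕜 (x : X)

@[simp]
theorem evalOnCLM_apply (S : Set X) (f : C(X, 𝕜)) (x : S) : evalOnCLM 𝕜 S f x = f x :=
  rfl

variable (w : C(X, 𝕜))

theorem mem_ker_mulLeft_iff {f : C(X, 𝕜)} : f ∈ ker (mulLeft 𝕜 w) ↔ ∀ x, w x ≠ 0 → f x = 0 := by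
  simp [ContinuousMap.ext_iff, or_iff_not_imp_left]

theorem range_mulLeft_le_ker_evalOnCLM :
    range (mulLeft 𝕜 w) ≤ (evalOnCLM 𝕜 {x | w x = 0}).toLinearMap.ker := by
  rintro _ ⟨f, rfl⟩
  ext ⟨x, hx⟩
  simp [show w x = 0 from hx]

/-- `f x / w x` is `0` at the zeros of `w`, by the junk value of division. -/
theorem continuous_div_of_isOpen_singleton {f : X → 𝕜} (hf : Continuous f)
    (hiso : ∀ x, w x = 0 → IsOpen {x}) : Continuous fun x => f x / w x := by
  refine continuous_iff_continuousAt.2 fun x => ?_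
  by_cases hx : w x = 0
  · rw [ContinuousAt, (isOpen_singleton_iff_nhds_eq_pure x).1 (hiso x hx)]
    exact tendsto_pure_nhds _ _
  · exact hf.continuousAt.div w.continuous.continuousAt hx

theorem range_mulLeft_eq_ker_evalOnCLM (hiso : ∀ x, w x = 0 → IsOpen {x}) :
    range (mulLeft 𝕜 w) = (evalOnCLM 𝕜 {x | w x = 0}).toLinearMap.ker := by
  refine (range_mulLeft_le_ker_evalOnCLM w).antisymm fun f hf => ?_
  refine ⟨⟨_, continuous_div_of_isOpen_singleton w f.continuous hiso⟩, ?_⟩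
  ext x
  by_cases hx : w x = 0
  · simpa [hx] using (congr_fun hf ⟨x, hx⟩).symm
  · simp [mul_div_cancel₀ _ hx]

theorem mem_range_mulLeft_of_isClosed [CompactSpace X] [T2Space X]
    (hw : IsClosed (range (mulLeft 𝕜 w) : Set C(X, 𝕜))) {f : C(X, 𝕜)}
    (hf : ∀ x, w x = 0 → f x = 0) : f ∈ range (mulLeft 𝕜 w) := by
  have hI : ((Ideal.span {w} : Ideal C(X, 𝕜)) : Set C(X, 𝕜)) = range (mulLeft 𝕜 w) := by
    ext g
    simp [Ideal.mem_span_singleton', mul_comm]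
  have hf' : f ∈ idealOfSet 𝕜 (setOfIdeal (Ideal.span {w})) := by
    refine mem_idealOfSet.2 fun x hx => hf x ?_
    rw [Set.mem_compl_iff, notMem_setOfIdeal] at hx
    exact hx (Ideal.mem_span_singleton_self w)
  rw [idealOfSet_ofIdeal_isClosed (hI ▸ hw)] at hf'
  rwa [← SetLike.mem_coe, ← hI]

theorem isOpen_setOf_eq_zero_of_isClosed_range_mulLeft [CompactSpace X] [T2Space X]
    (hw : IsClosed (range (mulLeft 𝕜 w) : Set C(X, 𝕜))) : IsOpen {x | w x = 0} := by
  -- `√‖w‖` vanishes on the zeros of `w`, and `w * h = √‖w‖` forces `‖w‖ ≥ ‖h‖⁻²` off them.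
  obtain ⟨h, hh⟩ := mem_range_mulLeft_of_isClosed w hw
    (f := ⟨fun x => (√‖w x‖ : 𝕜), by fun_prop⟩) (by simp +contextual)
  have key : ∀ x, w x ≠ 0 → ‖w x‖ * ‖h x‖ ^ 2 = 1 := fun x hx => by
    have hx' : 0 < ‖w x‖ := norm_pos_iff.2 hx
    have e : ‖w x‖ * ‖h x‖ = √‖w x‖ := by
      simpa [abs_of_nonneg (Real.sqrt_nonneg _)] using congr(‖$hh x‖)
    have e2 := congr($e ^ 2)
    rw [mul_pow, Real.sq_sqrt hx'.le] at e2
    exact mul_left_cancel₀ hx'.ne' (by linear_combination e2)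
  suffices {x | w x = 0} = {x | ‖w x‖ * ‖h‖ ^ 2 < 1} from
    this ▸ isOpen_lt (by fun_prop) (by fun_prop)
  ext x
  refine ⟨fun hx => by simp_all, fun hx => by_contra fun hx0 => ?_⟩
  refine (show ‖w x‖ * ‖h‖ ^ 2 < 1 from hx).not_ge ?_
  calc 1 = ‖w x‖ * ‖h x‖ ^ 2 := (key x hx0).symm
    _ ≤ ‖w x‖ * ‖h‖ ^ 2 := by gcongr; exact norm_coe_le_norm h x

theorem isOpen_setOf_eq_zero_of_isOpen_singleton (hiso : ∀ x, w x = 0 → IsOpen {x}) :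
    IsOpen {x | w x = 0} :=
  isOpen_iff_mem_nhds.2 fun x hx =>
    Filter.mem_of_superset ((hiso x hx).mem_nhds rfl) (Set.singleton_subset_iff.2 hx)

section Normal

variable [NormalSpace X] [T1Space X]

theorem surjective_evalOnCLM_of_finite {S : Set X} (hS : S.Finite) :
    Function.Surjective (evalOnCLM 𝕜 S) := fun c => by
  have := hS.fintype
  obtain ⟨f, hf, -⟩ := exists_forall_mem_finset_eq_and_eqOn_zero isClosed_empty
    (Set.empty_disjoint S) Finset.univ c
  exact ⟨f, funext fun x => hf x (Finset.mem_univ x)⟩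

theorem finite_setOf_eq_zero_of_finiteDimensional_quotient_range
    [FiniteDimensional 𝕜 (C(X, 𝕜) ⧸ range (mulLeft 𝕜 w))] : {x | w x = 0}.Finite := by
  refine Set.finite_coe_iff.mp <| finite_of_forall_finset_exists_apply_eq
    ((range _).liftQ _ (range_mulLeft_le_ker_evalOnCLM w)) fun t c => ?_
  obtain ⟨f, hf, -⟩ := exists_forall_mem_finset_eq_and_eqOn_zero isClosed_empty
    (Set.empty_disjoint _) t c
  exact ⟨Submodule.Quotient.mk f, hf⟩

theorem finite_setOf_eq_zero_of_finiteDimensional_ker (hZ : IsOpen {x | w x = 0})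
    [FiniteDimensional 𝕜 (ker (mulLeft 𝕜 w))] : {x | w x = 0}.Finite := by
  refine Set.finite_coe_iff.mp <| finite_of_forall_finset_exists_apply_eq
    ((evalOnCLM 𝕜 _).toLinearMap.domRestrict (ker (mulLeft 𝕜 w))) fun t c => ?_
  obtain ⟨f, hf, hf0⟩ := exists_forall_mem_finset_eq_and_eqOn_zero hZ.isClosed_compl
    disjoint_compl_left t c
  exact ⟨⟨f, (mem_ker_mulLeft_iff w).2 fun x hx => hf0 hx⟩, hf⟩

noncomputable def kerMulLeftEquiv (hfin : {x | w x = 0}.Finite)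
    (hiso : ∀ x, w x = 0 → IsOpen {x}) : ker (mulLeft 𝕜 w) ≃ₗ[𝕜] ({x | w x = 0} → 𝕜) := by
  refine .ofBijective ((evalOnCLM 𝕜 _).toLinearMap.domRestrict (ker (mulLeft 𝕜 w)))
    ⟨?_, fun c => ?_⟩
  · refine (injective_iff_map_eq_zero _).2 fun f hf => Subtype.ext <| ContinuousMap.ext fun x => ?_
    by_cases hx : w x = 0
    · exact congr_fun hf ⟨x, hx⟩
    · exact (mem_ker_mulLeft_iff w).1 f.2 x hx
  · have := hfin.fintype
    obtain ⟨f, hf, hf0⟩ := exists_forall_mem_finset_eq_and_eqOn_zero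
      (isOpen_setOf_eq_zero_of_isOpen_singleton w hiso).isClosed_compl disjoint_compl_left
      Finset.univ c
    exact ⟨⟨f, (mem_ker_mulLeft_iff w).2 fun x hx => hf0 hx⟩,
      funext fun x => hf x (Finset.mem_univ x)⟩

theorem isFredholmOfIndexZero_mulLeft (hfin : {x | w x = 0}.Finite)
    (hiso : ∀ x, w x = 0 → IsOpen {x}) : (mulLeft 𝕜 w).IsFredholmOfIndexZero := by
  have hrange := range_mulLeft_eq_ker_evalOnCLM w hiso
  have := hfin.fintype
  let eK := kerMulLeftEquiv w hfin hiso
  let eQ : (C(X, 𝕜) ⧸ range (mulLeft 𝕜 w)) ≃ₗ[𝕜] ({x | w x = 0} → 𝕜) :=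
    (Submodule.quotEquivOfEq _ _ hrange).trans
      ((evalOnCLM 𝕜 _).toLinearMap.quotKerEquivOfSurjective (surjective_evalOnCLM_of_finite hfin))
  exact ⟨hrange ▸ (evalOnCLM 𝕜 _).isClosed_ker, eK.symm.finiteDimensional,
    eQ.symm.finiteDimensional, eK.finrank_eq.trans eQ.finrank_eq.symm⟩

end Normal

theorem isSemiFredholm_mulLeft_iff [CompactSpace X] [T2Space X] :
    (mulLeft 𝕜 w).IsSemiFredholm ↔ {x | w x = 0}.Finite ∧ ∀ x, w x = 0 → IsOpen {x} := by
  refine ⟨fun ⟨hclosed, hfd⟩ => ?_, fun ⟨hfin, hiso⟩ =>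
    (isFredholmOfIndexZero_mulLeft w hfin hiso).isSemiFredholm⟩
  have hZ := isOpen_setOf_eq_zero_of_isClosed_range_mulLeft w hclosed
  have hfin : {x | w x = 0}.Finite := hfd.elim
    (fun _ => finite_setOf_eq_zero_of_finiteDimensional_ker w hZ)
    (fun _ => finite_setOf_eq_zero_of_finiteDimensional_quotient_range w)
  exact ⟨hfin, fun x hx => isOpen_singleton_of_finite_mem_nhds x (hZ.mem_nhds hx) hfin⟩

end MulLeft

end ContinuousMap

/-- For a weighted composition operator T = w·(f∘φ) on C(K) with φ a homeomorphism:
T is semi-Fredholm iff T is Fredholm of index 0 iff the zero set of w is finite and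
consists of isolated points of K. -/
theorem stmt11 {K : Type*} [TopologicalSpace K] [CompactSpace K] [T2Space K]
    (φ : K ≃ₜ K) (w : C(K, ℂ)) (T : C(K, ℂ) →L[ℂ] C(K, ℂ))
    (hT : ∀ (f : C(K, ℂ)) (k : K), T f k = w k * f (φ k)) :
    ((IsClosed (LinearMap.range (T : C(K, ℂ) →ₗ[ℂ] C(K, ℂ)) : Set C(K, ℂ)) ∧
        (FiniteDimensional ℂ (LinearMap.ker (T : C(K, ℂ) →ₗ[ℂ] C(K, ℂ))) ∨
         FiniteDimensional ℂ (C(K, ℂ) ⧸ LinearMap.range (T : C(K, ℂ) →ₗ[ℂ] C(K, ℂ))))) ↔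
      (IsClosed (LinearMap.range (T : C(K, ℂ) →ₗ[ℂ] C(K, ℂ)) : Set C(K, ℂ)) ∧
        FiniteDimensional ℂ (LinearMap.ker (T : C(K, ℂ) →ₗ[ℂ] C(K, ℂ))) ∧
        FiniteDimensional ℂ (C(K, ℂ) ⧸ LinearMap.range (T : C(K, ℂ) →ₗ[ℂ] C(K, ℂ))) ∧
        Module.finrank ℂ (LinearMap.ker (T : C(K, ℂ) →ₗ[ℂ] C(K, ℂ))) =
          Module.finrank ℂ (C(K, ℂ) ⧸ LinearMap.range (T : C(K, ℂ) →ₗ[ℂ] C(K, ℂ))))) ∧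
    ((IsClosed (LinearMap.range (T : C(K, ℂ) →ₗ[ℂ] C(K, ℂ)) : Set C(K, ℂ)) ∧
        (FiniteDimensional ℂ (LinearMap.ker (T : C(K, ℂ) →ₗ[ℂ] C(K, ℂ))) ∨
         FiniteDimensional ℂ (C(K, ℂ) ⧸ LinearMap.range (T : C(K, ℂ) →ₗ[ℂ] C(K, ℂ))))) ↔
      ({k : K | w k = 0}.Finite ∧ ∀ k : K, w k = 0 → IsOpen ({k} : Set K))) := by
  set A : C(K, ℂ) →ₗ[ℂ] C(K, ℂ) := (T : C(K, ℂ) →ₗ[ℂ] C(K, ℂ))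
  change (A.IsSemiFredholm ↔ A.IsFredholmOfIndexZero) ∧
    (A.IsSemiFredholm ↔ {k : K | w k = 0}.Finite ∧ ∀ k : K, w k = 0 → IsOpen ({k} : Set K))
  have hA : A = mulLeft ℂ w ∘ₗ (φ.compStarAlgEquiv' ℂ ℂ).toAlgEquiv.toLinearEquiv.toLinearMap := by
    ext f k
    simp [A, hT]
  rw [hA, isSemiFredholm_comp_equiv_iff, isFredholmOfIndexZero_comp_equiv_iff]
  refine ⟨⟨fun h => ?_, IsFredholmOfIndexZero.isSemiFredholm⟩, isSemiFredholm_mulLeft_iff w⟩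
  obtain ⟨hfin, hiso⟩ := (isSemiFredholm_mulLeft_iff w).1 h
  exact isFredholmOfIndexZero_mulLeft w hfin hiso
end

section
/- Let K be an extremally disconnected compact Hausdorff space, Y a Banach space, and w : K → L(Y) a continuous map (in operator norm). Define T on C(K, Y) by (Tx)(k) = w(k)(x(k)). Then σ(T) = ⋃_{k ∈ K} σ(w(k)) and σ_{a.p.}(T) = ⋃_{k ∈ K} σ_{a.p.}(w(k)). -/
/-!
A lower bound `c ‖x‖ ≤ ‖T x‖` for the multiplication operator passes to each `w k`: otherwise
`‖w k' y‖ < c ‖y‖` on a clopen neighbourhood `U` of `k`, and the test function `1_U · y` violates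
the bound for `T`. Conversely, pointwise lower bounds survive small perturbations, so by
compactness they can be chosen uniformly in `k`, and a uniform bound for the `w k` is one for `T`.
Hence both operators are bounded below together. For invertibility, `T` invertible forces `w k`
to be injective (being bounded below) and surjective (apply `T⁻¹` to constants); if all `w k` are
invertible, `k ↦ (w k)⁻¹` is continuous and multiplication by it inverts `T`.
-/

open Set Filter Topology

section MultiplicationOperator

variable {𝕜 : Type*} [NontriviallyNormedField 𝕜]
  {E : Type*} [NormedAddCommGroup E] [NormedSpace 𝕜 E]
  {F : Type*} [NormedAddCommGroup F] [NormedSpace 𝕜 F]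

def IsBoundedBelow (A : E →L[𝕜] F) : Prop :=
  ∃ c : ℝ, 0 < c ∧ ∀ x, c * ‖x‖ ≤ ‖A x‖

theorem IsBoundedBelow.injective {A : E →L[𝕜] F} (hA : IsBoundedBelow A) :
    Function.Injective A := by
  obtain ⟨c, hc, hA⟩ := hA
  refine (injective_iff_map_eq_zero A).2 fun x hx => norm_le_zero_iff.1 ?_
  have := hA x
  rw [hx, norm_zero] at this
  exact nonpos_of_mul_nonpos_right this hc

theorem IsBoundedBelow.of_isUnit {A : E →L[𝕜] E} (hA : IsUnit A) : IsBoundedBelow A := by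
  obtain ⟨⟨A, B, -, hBA⟩, rfl⟩ := hA
  refine ⟨(‖B‖ + 1)⁻¹, by positivity, fun x => ?_⟩
  rw [inv_mul_le_iff₀ (by positivity)]
  calc ‖x‖ = ‖B (A x)‖ := by rw [← mul_apply_eq_comp, hBA, one_apply_eq_self]
    _ ≤ ‖B‖ * ‖A x‖ := B.le_opNorm _
    _ ≤ (‖B‖ + 1) * ‖A x‖ := by gcongr; linarith

theorem lower_bound_of_norm_sub_le {A B : E →L[𝕜] F} {c c' : ℝ}
    (hA : ∀ x, c * ‖x‖ ≤ ‖A x‖) (hAB : ‖B - A‖ ≤ c - c') (x : E) : c' * ‖x‖ ≤ ‖B x‖ := by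
  have hdiff : ‖A x‖ - ‖B x‖ ≤ (c - c') * ‖x‖ :=
    calc ‖A x‖ - ‖B x‖ ≤ ‖(B - A) x‖ := by
          rw [sub_apply, norm_sub_rev]; exact norm_sub_norm_le _ _
      _ ≤ ‖B - A‖ * ‖x‖ := (B - A).le_opNorm x
      _ ≤ (c - c') * ‖x‖ := by gcongr
  linarith [hA x]

variable {K : Type*} [TopologicalSpace K]

theorem exists_uniform_lower_bound [CompactSpace K] {u : C(K, E →L[𝕜] F)}
    (h : ∀ k, IsBoundedBelow (u k)) : ∃ c : ℝ, 0 < c ∧ ∀ k x, c * ‖x‖ ≤ ‖u k x‖ := by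
  suffices ∀ᶠ c in 𝓝[>] (0 : ℝ), ∀ k ∈ (univ : Set K), ∀ x, c * ‖x‖ ≤ ‖u k x‖ by
    obtain ⟨c, hc, hpos⟩ := (this.and self_mem_nhdsWithin).exists
    exact ⟨c, hpos, fun k => hc k (mem_univ k)⟩
  refine isCompact_univ.induction_on (by simp) (fun s t hst ht => ?_) (fun s t hs ht => ?_)
    fun k _ => ?_
  · exact ht.mono fun c hc k hk => hc k (hst hk)
  · filter_upwards [hs, ht] with c hcs hct k hk
    exact hk.elim (hcs k) (hct k)
  · obtain ⟨c, hc, hk⟩ := h k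
    have hnear : {k' | ‖u k' - u k‖ < c / 2} ∈ 𝓝 k :=
      (isOpen_lt (u.continuous.sub continuous_const).norm continuous_const).mem_nhds
        (by simpa using half_pos hc)
    refine ⟨_, mem_nhdsWithin_of_mem_nhds hnear, ?_⟩
    filter_upwards [Ioo_mem_nhdsGT (half_pos hc)] with c' hc' k' hk'
    exact lower_bound_of_norm_sub_le hk (by linarith [hc'.2, (show ‖u k' - u k‖ < c / 2 from hk')])

def IsMulOperator (u : C(K, E →L[𝕜] F)) (S : C(K, E) →L[𝕜] C(K, F)) : Prop :=
  ∀ x k, S x k = u k (x k)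

theorem IsMulOperator.algebraMap_sub {u : C(K, E →L[𝕜] E)} {S : C(K, E) →L[𝕜] C(K, E)}
    (hS : IsMulOperator u S) (l : 𝕜) :
    IsMulOperator (algebraMap 𝕜 _ l - u) (algebraMap 𝕜 _ l - S) := fun x k => by
  simp [Algebra.algebraMap_eq_smul_one, hS x k]

namespace IsMulOperator

variable [CompactSpace K] {u : C(K, E →L[𝕜] F)} {S : C(K, E) →L[𝕜] C(K, F)}

theorem isBoundedBelow_apply [T2Space K] [TotallyDisconnectedSpace K] (hS : IsMulOperator u S)
    (hbb : IsBoundedBelow S) (k : K) : IsBoundedBelow (u k) := by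
  obtain ⟨c, hc, hSc⟩ := hbb
  refine ⟨c, hc, fun y => ?_⟩
  by_contra! hlt
  have hpos : 0 < c * ‖y‖ := (norm_nonneg _).trans_lt hlt
  obtain ⟨U, ⟨hkU, hU⟩, hUlt⟩ := (nhds_basis_clopen k).mem_iff.mp
    ((isOpen_lt (u.continuous.clm_apply continuous_const).norm continuous_const).mem_nhds hlt)
  let x : C(K, E) := ⟨U.indicator fun _ => y, hU.continuous_indicator continuous_const⟩
  have hSx : ‖S x‖ < c * ‖y‖ := by
    refine (ContinuousMap.norm_lt_iff _ hpos).2 fun k' => ?_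
    rw [hS]
    by_cases hk' : k' ∈ U
    · simpa [x, hk'] using hUlt hk'
    · simpa [x, hk'] using hpos
  have hxy : ‖y‖ ≤ ‖x‖ := by simpa [x, hkU] using x.norm_coe_le_norm k
  linarith [hSc x, mul_le_mul_of_nonneg_left hxy hc.le]

theorem isBoundedBelow (hS : IsMulOperator u S) (h : ∀ k, IsBoundedBelow (u k)) :
    IsBoundedBelow S := by
  obtain ⟨c, hc, hu⟩ := exists_uniform_lower_bound h
  refine ⟨c, hc, fun x => ?_⟩
  rw [mul_comm, ← le_div_iff₀ hc]
  refine (ContinuousMap.norm_le _ (by positivity)).2 fun k => ?_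
  rw [le_div_iff₀ hc, mul_comm]
  calc c * ‖x k‖ ≤ ‖u k (x k)‖ := hu k (x k)
    _ = ‖S x k‖ := by rw [hS]
    _ ≤ ‖S x‖ := (S x).norm_coe_le_norm k

theorem isBoundedBelow_iff [T2Space K] [TotallyDisconnectedSpace K] (hS : IsMulOperator u S) :
    IsBoundedBelow S ↔ ∀ k, IsBoundedBelow (u k) :=
  ⟨hS.isBoundedBelow_apply, hS.isBoundedBelow⟩

end IsMulOperator

def approxPointSpectrum (A : E →L[𝕜] E) : Set 𝕜 :=
  {l | ¬ IsBoundedBelow (algebraMap 𝕜 (E →L[𝕜] E) l - A)}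

namespace IsMulOperator

variable [CompactSpace K] {u : C(K, E →L[𝕜] E)} {S : C(K, E) →L[𝕜] C(K, E)}

theorem approxPointSpectrum_eq [T2Space K] [TotallyDisconnectedSpace K]
    (hS : IsMulOperator u S) : approxPointSpectrum S = ⋃ k, approxPointSpectrum (u k) := by
  ext l
  simp only [approxPointSpectrum, mem_ofPred_eq, mem_iUnion,
    (hS.algebraMap_sub l).isBoundedBelow_iff, not_forall]
  simp [Algebra.algebraMap_eq_smul_one]

theorem isUnit_apply [T2Space K] [TotallyDisconnectedSpace K] [CompleteSpace E]
    (hS : IsMulOperator u S) (h : IsUnit S) (k : K) : IsUnit (u k) := by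
  refine ContinuousLinearMap.isUnit_iff_bijective.2
    ⟨(hS.isBoundedBelow_apply (.of_isUnit h) k).injective, fun y => ?_⟩
  obtain ⟨x, hx⟩ := (ContinuousLinearMap.isUnit_iff_bijective.1 h).2 (ContinuousMap.const K y)
  exact ⟨x k, by rw [← hS, hx, ContinuousMap.const_apply]⟩

theorem isUnit [CompleteSpace E] (hS : IsMulOperator u S) (h : ∀ k, IsUnit (u k)) :
    IsUnit S := by
  obtain ⟨v, rfl⟩ := (ContinuousMap.isUnit_iff_forall_isUnit u).2 h
  have hinv : ∀ k y, (v : C(K, E →L[𝕜] E)) k ((↑v⁻¹ : C(K, E →L[𝕜] E)) k y) = y := fun k y => by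
    rw [← mul_apply_eq_comp, ← ContinuousMap.mul_apply, v.mul_inv, ContinuousMap.one_apply,
      one_apply_eq_self]
  refine ContinuousLinearMap.isUnit_iff_bijective.2 ⟨fun x x' hxx' => ?_, fun f => ?_⟩
  · ext k
    apply (ContinuousLinearMap.isUnit_iff_bijective.1 (h k)).1
    rw [← hS, ← hS, hxx']
  · refine ⟨⟨fun k => (↑v⁻¹ : C(K, E →L[𝕜] E)) k (f k),
      (v⁻¹ : C(K, E →L[𝕜] E)ˣ).val.continuous.clm_apply f.continuous⟩, ?_⟩
    ext k
    exact (hS _ k).trans (hinv k (f k))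

theorem isUnit_iff [T2Space K] [TotallyDisconnectedSpace K] [CompleteSpace E]
    (hS : IsMulOperator u S) : IsUnit S ↔ ∀ k, IsUnit (u k) :=
  ⟨hS.isUnit_apply, hS.isUnit⟩

theorem spectrum_eq [T2Space K] [TotallyDisconnectedSpace K] [CompleteSpace E]
    (hS : IsMulOperator u S) : spectrum 𝕜 S = ⋃ k, spectrum 𝕜 (u k) := by
  ext l
  simp only [spectrum.mem_iff, mem_iUnion, (hS.algebraMap_sub l).isUnit_iff, not_forall]
  simp [Algebra.algebraMap_eq_smul_one]

end IsMulOperator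

end MultiplicationOperator

/-- For the multiplication operator (Tx)(k) = w(k)(x(k)) on C(K, Y), K extremally
disconnected compact: σ(T) = ⋃ₖ σ(w(k)) and σ_{a.p.}(T) = ⋃ₖ σ_{a.p.}(w(k)). -/
theorem stmt12 {K : Type*} [TopologicalSpace K] [CompactSpace K] [T2Space K]
    [ExtremallyDisconnected K]
    {Y : Type*} [NormedAddCommGroup Y] [NormedSpace ℂ Y] [CompleteSpace Y]
    (w : C(K, Y →L[ℂ] Y)) (T : C(K, Y) →L[ℂ] C(K, Y))
    (hT : ∀ (x : C(K, Y)) (k : K), T x k = w k (x k)) :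
    (spectrum ℂ T = ⋃ k : K, spectrum ℂ (w k)) ∧
    ({l : ℂ | ¬ ∃ c : ℝ, 0 < c ∧ ∀ x : C(K, Y), c * ‖x‖ ≤ ‖l • x - T x‖} =
      ⋃ k : K, {l : ℂ | ¬ ∃ c : ℝ, 0 < c ∧ ∀ y : Y, c * ‖y‖ ≤ ‖l • y - w k y‖}) :=
  -- `hT` unfolds to `IsMulOperator w T`, and the second conjunct to
  -- `approxPointSpectrum T = ⋃ k, approxPointSpectrum (w k)`.
  ⟨IsMulOperator.spectrum_eq hT, IsMulOperator.approxPointSpectrum_eq hT⟩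
end

section
/- Let ℓ^∞(ℕ) be identified with C(K) where K is the Gelfand space, let φ : ℕ → ℕ be the map φ(1) = 1 and φ(k) = k − 1 for k > 1, extended to a continuous surjection ψ : K → K, let w(1) = 1 and w(k) = 2 for k > 1, with W ∈ C(K) the corresponding function, and define (Tf)(k) = W(k) f(ψ(k)) on C(K). Then 1 ∈ σ(T) but 1 is not in the approximate point spectrum of T; i.e. 1 ∈ σ_r(T). -/
/-!
The shift part of `T` doubles norms, so `‖T x - x‖ ≥ 2‖x‖ - ‖x‖ = ‖x‖` and `T - 1` is bounded
below. On the other hand `T` fixes the `0`-th coordinate, so every `x - T x` vanishes there and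
`1 - T` misses the unit vector at `0`; hence `1 - T` is not invertible.
-/

open Filter Topology

theorem mem_spectrum_of_not_surjective {𝕜 E : Type*} [NontriviallyNormedField 𝕜]
    [NormedAddCommGroup E] [NormedSpace 𝕜 E] {T : E →L[𝕜] E} {a : 𝕜}
    (h : ¬ Function.Surjective (algebraMap 𝕜 (E →L[𝕜] E) a - T)) : a ∈ spectrum 𝕜 T :=
  spectrum.mem_iff.mpr fun hu => h fun y =>
    let ⟨g, hg⟩ := hu.exists_right_inv
    ⟨g y, congr($hg y)⟩

theorem not_tendsto_norm_zero_of_norm_le {E F : Type*} [SeminormedAddCommGroup E]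
    [SeminormedAddCommGroup F] {f : E → F} {c : ℝ} (hc : 0 < c) (hf : ∀ x, c * ‖x‖ ≤ ‖f x‖)
    {x : ℕ → E} (hx : ∀ n, ‖x n‖ = 1) : ¬ Tendsto (fun n => ‖f (x n)‖) atTop (𝓝 0) := fun h =>
  hc.not_ge <| ge_of_tendsto' h fun n => by simpa [hx n] using hf (x n)

namespace lp

variable {T : lp (fun _ : ℕ => ℂ) ⊤ →L[ℂ] lp (fun _ : ℕ => ℂ) ⊤}

theorem norm_smul_le_norm_of_apply_succ {c : ℂ}
    (hT : ∀ (x : lp (fun _ : ℕ => ℂ) ⊤) (n : ℕ), T x (n + 1) = c * x n)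
    (x : lp (fun _ : ℕ => ℂ) ⊤) : ‖c‖ * ‖x‖ ≤ ‖T x‖ := by
  rw [← norm_smul]
  refine lp.norm_le_of_forall_le (norm_nonneg _) fun n => ?_
  calc ‖(c • x) n‖ = ‖T x (n + 1)‖ := by rw [hT, lp.coeFn_smul, Pi.smul_apply, smul_eq_mul]
    _ ≤ ‖T x‖ := lp.norm_apply_le_norm ENNReal.top_ne_zero _ _

theorem norm_le_norm_apply_sub_self
    (hT : ∀ (x : lp (fun _ : ℕ => ℂ) ⊤) (n : ℕ), T x (n + 1) = 2 * x n)
    (x : lp (fun _ : ℕ => ℂ) ⊤) : ‖x‖ ≤ ‖T x - x‖ := by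
  have h2 : 2 * ‖x‖ ≤ ‖T x‖ := by simpa using norm_smul_le_norm_of_apply_succ hT x
  linarith [norm_le_norm_sub_add (T x) x]

theorem single_zero_notMem_range_one_sub
    (hT : ∀ x : lp (fun _ : ℕ => ℂ) ⊤, T x 0 = x 0) :
    lp.single ⊤ 0 1 ∉ Set.range ⇑(1 - T) := by
  rintro ⟨x, hx⟩
  have h0 : (1 - T) x 0 = 0 := by simp [hT]
  rw [hx, lp.single_apply_self] at h0
  exact one_ne_zero h0

end lp

/-- On ℓ∞(ℕ), the operator (Tx)(0) = x(0), (Tx)(n) = 2·x(n−1) for n ≥ 1 has 1 in its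
spectrum but 1 is not an approximate eigenvalue; i.e. 1 ∈ σ_r(T). -/
theorem stmt14 (T : lp (fun _ : ℕ => ℂ) ⊤ →L[ℂ] lp (fun _ : ℕ => ℂ) ⊤)
    (hT : ∀ (x : lp (fun _ : ℕ => ℂ) ⊤) (n : ℕ),
      (T x : ∀ _ : ℕ, ℂ) n = if n = 0 then (x : ∀ _ : ℕ, ℂ) 0
        else 2 * (x : ∀ _ : ℕ, ℂ) (n - 1)) :
    (1 : ℂ) ∈ spectrum ℂ T ∧
    ¬ ∃ x : ℕ → lp (fun _ : ℕ => ℂ) ⊤, (∀ n, ‖x n‖ = 1) ∧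
        Tendsto (fun n => ‖T (x n) - x n‖) atTop (𝓝 0) := by
  have hfix : ∀ x, T x 0 = x 0 := fun x => by simp [hT]
  have hshift : ∀ x n, T x (n + 1) = 2 * x n := fun x n => by simp [hT]
  refine ⟨mem_spectrum_of_not_surjective fun hsurj => ?_, ?_⟩
  · rw [map_one] at hsurj
    exact lp.single_zero_notMem_range_one_sub hfix (hsurj _)
  · rintro ⟨x, hx, hlim⟩
    exact not_tendsto_norm_zero_of_norm_le one_pos
      (fun y => (one_mul ‖y‖).trans_le (lp.norm_le_norm_apply_sub_self hshift y)) hx hlim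
end

section
/- Let X be a Kaplansky C(K)-module, T ∈ L(X) a d-endomorphism with associated clopen set E ⊆ K and continuous map φ : E → K satisfying T(fx) = (f∘φ) Tx, and suppose there exists r ∈ C(K) with |r| ≡ 1 such that r(φ(k)) = λ r(k) for all k ∈ E, where λ^m = 1. Then r⁻¹ T r = λ T, and consequently the spectrum of T is invariant under multiplication by λ: λσ(T) = σ(T). -/
open Pointwise

/-!
Multiplying `T(r x) = (r ∘ φ) T x = λ r χ_E T x` on the left by `r⁻¹` gives `r⁻¹ T r = λ χ_E T`,
and `χ_E T = T` because the coefficient of `T x` always vanishes off `E` (take `f = 1` in the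
twisting identity). So `λ T` is a conjugate of `T`, which has the same spectrum, while
`σ(λ T) = λ σ(T)` since `λ ≠ 0` as a root of unity.
-/

/-- The relation `T (f x) = (f ∘ φ) (T x)`, with `f ∘ φ` extended by `0` off `E`, written in the
algebra `A` of operators. -/
def IsDEndomorphism {K 𝕜 A : Type*} [TopologicalSpace K] [CommRing 𝕜] [TopologicalSpace 𝕜]
    [IsTopologicalRing 𝕜] [Ring A] [Algebra 𝕜 A] (m : C(K, 𝕜) →ₐ[𝕜] A) (E : Set K) (φ : E → K)
    (T : A) : Prop :=
  ∀ f g : C(K, 𝕜), (∀ (k : K) (hk : k ∈ E), g k = f (φ ⟨k, hk⟩)) → (∀ k ∉ E, g k = 0) →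
    T * m f = m g * T

namespace IsDEndomorphism

variable {K 𝕜 A : Type*} [TopologicalSpace K] [CommRing 𝕜] [TopologicalSpace 𝕜]
  [IsTopologicalRing 𝕜] [Ring A] [Algebra 𝕜 A] {m : C(K, 𝕜) →ₐ[𝕜] A} {E : Set K} {φ : E → K}
  {T : A}

theorem charFn_mul (hT : IsDEndomorphism m E φ T) (hE : IsClopen E) :
    m (LocallyConstant.charFn 𝕜 hE) * T = T := by
  have h := hT 1 (LocallyConstant.charFn 𝕜 hE)
    (fun k hk => by simp [LocallyConstant.coe_charFn, hk])
    (fun k hk => by simp [LocallyConstant.coe_charFn, hk])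
  rw [map_one, mul_one] at h
  exact h.symm

theorem conj_eq_smul (hT : IsDEndomorphism m E φ T) (hE : IsClopen E) {l : 𝕜}
    {r rinv : C(K, 𝕜)} (hrinv : r * rinv = 1)
    (hrφ : ∀ (k : K) (hk : k ∈ E), r (φ ⟨k, hk⟩) = l * r k) :
    m rinv * T * m r = l • T := by
  set χ : C(K, 𝕜) := ↑(LocallyConstant.charFn 𝕜 hE)
  have hTr : T * m r = m (l • (r * χ)) * T :=
    hT r _ (fun k hk => by simp [χ, LocallyConstant.coe_charFn, hk, hrφ k hk])
      (fun k hk => by simp [χ, LocallyConstant.coe_charFn, hk])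
  have hcancel : rinv * (l • (r * χ)) = l • χ := by
    rw [mul_smul_comm, ← mul_assoc, mul_comm rinv r, hrinv, one_mul]
  calc m rinv * T * m r = m (rinv * (l • (r * χ))) * T := by
        rw [mul_assoc, hTr, map_mul, mul_assoc]
    _ = l • T := by rw [hcancel, map_smul, smul_mul_assoc, hT.charFn_mul hE]

end IsDEndomorphism

theorem spectrum.smul_eq_of_units_conjugate_eq_smul {R A : Type*} [Semifield R] [Ring A]
    [Algebra R A] {a : A} {u : Aˣ} {l : R} (hl : l ≠ 0) (h : ↑u⁻¹ * a * ↑u = l • a) :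
    l • spectrum R a = spectrum R a := by
  calc l • spectrum R a = Units.mk0 l hl • spectrum R a := rfl
    _ = spectrum R (Units.mk0 l hl • a) := (spectrum.unit_smul_eq_smul a _).symm
    _ = spectrum R a := by rw [Units.smul_mk0, ← h, spectrum.units_conjugate']

theorem stmt15_general {K : Type*} [TopologicalSpace K]
    {X : Type*} [NormedAddCommGroup X] [NormedSpace ℂ X]
    (mK : C(K, ℂ) →ₐ[ℂ] (X →L[ℂ] X))
    (E : Set K) (hE : IsClopen E) (φ : E → K)
    (T : X →L[ℂ] X)
    (hT : ∀ f g : C(K, ℂ), (∀ (k : K) (hk : k ∈ E), g k = f (φ ⟨k, hk⟩)) →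
        (∀ k ∉ E, g k = 0) → ∀ x : X, T (mK f x) = mK g (T x))
    (mm : ℕ) (hmm : 1 ≤ mm) (l : ℂ) (hl : l ^ mm = 1)
    (r rinv : C(K, ℂ)) (hrinv : r * rinv = 1)
    (hrφ : ∀ (k : K) (hk : k ∈ E), r (φ ⟨k, hk⟩) = l * r k) :
    (∀ x : X, mK rinv (T (mK r x)) = l • T x) ∧
    l • spectrum ℂ T = spectrum ℂ T := by
  have hTd : IsDEndomorphism mK E φ T := fun f g hg hg0 =>
    ContinuousLinearMap.ext (hT f g hg hg0)
  have hconj : mK rinv * T * mK r = l • T := hTd.conj_eq_smul hE hrinv hrφ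
  let u : (X →L[ℂ] X)ˣ := Units.map mK ⟨r, rinv, hrinv, by rw [mul_comm, hrinv]⟩
  have hl0 : l ≠ 0 := ne_zero_pow (Nat.one_le_iff_ne_zero.mp hmm) (hl ▸ one_ne_zero)
  exact ⟨fun x => congr($hconj x),
    spectrum.smul_eq_of_units_conjugate_eq_smul (u := u) hl0 hconj⟩

/-- If T is a d-endomorphism of a Kaplansky module with twist map φ, and r ∈ C(K) is
unimodular with r∘φ = λ·r where λ^m = 1, then r⁻¹ T r = λ T and λ·σ(T) = σ(T). -/
theorem stmt15 {K : Type*} [TopologicalSpace K] [CompactSpace K] [T2Space K]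
    [ExtremallyDisconnected K]
    {X : Type*} [NormedAddCommGroup X] [NormedSpace ℂ X] [CompleteSpace X]
    (mK : C(K, ℂ) →ₐ[ℂ] (X →L[ℂ] X)) (hmK : Isometry mK)
    (hKap : ∀ x : X, ∃ U : Set K, IsClopen U ∧
        ∀ f : C(K, ℂ), (mK f x = 0 ↔ ∀ k ∈ U, f k = 0))
    (E : Set K) (hE : IsClopen E) (φ : E → K) (hφ : Continuous φ)
    (T : X →L[ℂ] X)
    (hT : ∀ f g : C(K, ℂ), (∀ (k : K) (hk : k ∈ E), g k = f (φ ⟨k, hk⟩)) →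
        (∀ k ∉ E, g k = 0) → ∀ x : X, T (mK f x) = mK g (T x))
    (mm : ℕ) (hmm : 1 ≤ mm) (l : ℂ) (hl : l ^ mm = 1)
    (r rinv : C(K, ℂ)) (hr : ∀ k : K, ‖r k‖ = 1) (hrinv : r * rinv = 1)
    (hrφ : ∀ (k : K) (hk : k ∈ E), r (φ ⟨k, hk⟩) = l * r k) :
    (∀ x : X, mK rinv (T (mK r x)) = l • T x) ∧
    l • spectrum ℂ T = spectrum ℂ T :=
  stmt15_general mK E hE φ T hT mm hmm l hl r rinv hrinv hrφ
end
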